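/- arXiv:2307.07891 — 7 statements merged into one kernel-verified Lean document; each statement's English description precedes it below -/
import Mathlib

section
/- Suppose Assumptions 1 and 2 hold. Then, with β = η_Δ / (2h(Δ)), there exist constants C > 0 and λ > 0, depending only on (Δ, γ_Δ, h(Δ), η_Δ, R), such that for all probability measures μ1, μ2 on X with ∫ V dμ1 < ∞ and ∫ V dμ2 < ∞ and all s ≤ t: ρ_β(P*(t,s)μ1, P*(t,s)μ2) ≤ C · e^{−λ(t−s)} · ρ_β(μ1, μ2). -/
open MeasureTheory ENNReal Filter

/-- The total variation measure `|μ1 - μ2|` of the difference of two (finite) measures. -/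
noncomputable def tvMeasure {X : Type*} [MeasurableSpace X] (μ1 μ2 : Measure X) : Measure X :=
  (μ1 - μ2) + (μ2 - μ1)

/-- The weighted total variation distance `ρ_β(μ1, μ2) = ∫ (1 + β V) d|μ1 - μ2|`. -/
noncomputable def rhoB {X : Type*} [MeasurableSpace X] (β : ℝ) (V : X → ℝ)
    (μ1 μ2 : Measure X) : ℝ≥0∞ :=
  ∫⁻ x, ENNReal.ofReal (1 + β * V x) ∂(tvMeasure μ1 μ2)

namespace Stmt6

variable {X : Type*} [MeasurableSpace X]

/-! ### Basic bind lemmas -/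

lemma bind_univ (μ : Measure X) {Q : X → Measure X} (hQ : Measurable Q)
    (hp : ∀ x, IsProbabilityMeasure (Q x)) : (μ.bind Q) Set.univ = μ Set.univ := by
  rw [Measure.bind_apply MeasurableSet.univ hQ.aemeasurable]
  simp only [measure_univ, lintegral_one]

lemma isProb_bind (μ : Measure X) {Q : X → Measure X} (hQ : Measurable Q)
    (hp : ∀ x, IsProbabilityMeasure (Q x)) [IsProbabilityMeasure μ] :
    IsProbabilityMeasure (μ.bind Q) :=
  ⟨by rw [bind_univ μ hQ hp]; exact measure_univ⟩

lemma isFinite_bind (μ : Measure X) {Q : X → Measure X} (hQ : Measurable Q)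
    (hp : ∀ x, IsProbabilityMeasure (Q x)) [IsFiniteMeasure μ] :
    IsFiniteMeasure (μ.bind Q) :=
  ⟨by rw [bind_univ μ hQ hp]; exact measure_lt_top μ _⟩

lemma bind_add_meas (μ ν : Measure X) {Q : X → Measure X} (hQ : Measurable Q) :
    (μ + ν).bind Q = μ.bind Q + ν.bind Q := by
  ext s hs
  simp [Measure.bind_apply hs hQ.aemeasurable, lintegral_add_measure]

lemma bind_smul_meas (c : ℝ≥0∞) (μ : Measure X) {Q : X → Measure X} (hQ : Measurable Q) :
    (c • μ).bind Q = c • (μ.bind Q) := by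
  ext s hs
  simp [Measure.bind_apply hs hQ.aemeasurable, lintegral_smul_measure]

lemma bind_mono_meas {μ ν : Measure X} (hle : μ ≤ ν) {Q : X → Measure X} (hQ : Measurable Q) :
    μ.bind Q ≤ ν.bind Q := by
  rw [Measure.le_iff]
  intro s hs
  rw [Measure.bind_apply hs hQ.aemeasurable, Measure.bind_apply hs hQ.aemeasurable]
  exact lintegral_mono' hle le_rfl

/-! ### Hahn decomposition facts for measure subtraction -/

lemma exists_hahn (μ ν : Measure X) [IsFiniteMeasure μ] [IsFiniteMeasure ν] :
    ∃ s : Set X, MeasurableSet s ∧ ν.restrict s ≤ μ.restrict s ∧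
      μ.restrict sᶜ ≤ ν.restrict sᶜ := by
  obtain ⟨s, hs, h1, h2⟩ := hahn_decomposition (μ := μ) (ν := ν)
  refine ⟨s, hs, ?_, ?_⟩ <;> rw [Measure.le_iff] <;> intro t ht <;>
    rw [Measure.restrict_apply ht, Measure.restrict_apply ht]
  · exact h1 _ (ht.inter hs) Set.inter_subset_right
  · exact h2 _ (ht.inter hs.compl) Set.inter_subset_right

lemma sub_apply_hahn (μ ν : Measure X) [IsFiniteMeasure μ] [IsFiniteMeasure ν]
    {s : Set X} (hs : MeasurableSet s)
    (h1 : ν.restrict s ≤ μ.restrict s) (h2 : μ.restrict sᶜ ≤ ν.restrict sᶜ)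
    {t : Set X} (ht : MeasurableSet t) :
    (μ - ν) t = μ (t ∩ s) - ν (t ∩ s) := by
  have h3 : (μ - ν) (t ∩ sᶜ) = 0 := by
    have e0 : μ.restrict sᶜ - ν.restrict sᶜ = 0 := Measure.sub_eq_zero_of_le h2
    calc (μ - ν) (t ∩ sᶜ) = ((μ - ν).restrict sᶜ) t := (Measure.restrict_apply ht).symm
      _ = (μ.restrict sᶜ - ν.restrict sᶜ) t := by
            rw [Measure.restrict_sub_eq_restrict_sub_restrict hs.compl]
      _ = 0 := by rw [e0]; rfl
  have h4 : (μ - ν) (t ∩ s) = μ (t ∩ s) - ν (t ∩ s) := by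
    calc (μ - ν) (t ∩ s) = ((μ - ν).restrict s) t := (Measure.restrict_apply ht).symm
      _ = (μ.restrict s - ν.restrict s) t := by
            rw [Measure.restrict_sub_eq_restrict_sub_restrict hs]
      _ = μ.restrict s t - ν.restrict s t := Measure.sub_apply ht h1
      _ = μ (t ∩ s) - ν (t ∩ s) := by rw [Measure.restrict_apply ht, Measure.restrict_apply ht]
  have h5 : (μ - ν) t = (μ - ν) (t ∩ s) + (μ - ν) (t ∩ sᶜ) := by
    rw [← measure_inter_add_diff t hs, Set.diff_eq]
  rw [h5, h3, add_zero, h4]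

lemma le_sub_add' (μ ν : Measure X) [IsFiniteMeasure μ] [IsFiniteMeasure ν] :
    μ ≤ (μ - ν) + ν := by
  obtain ⟨s, hs, h1, h2⟩ := exists_hahn μ ν
  rw [Measure.le_iff]
  intro t ht
  rw [Measure.add_apply, sub_apply_hahn μ ν hs h1 h2 ht]
  have e1 : μ t = μ (t ∩ s) + μ (t ∩ sᶜ) := by
    rw [← measure_inter_add_diff t hs, Set.diff_eq]
  have e2 : ν t = ν (t ∩ s) + ν (t ∩ sᶜ) := by
    rw [← measure_inter_add_diff t hs, Set.diff_eq]
  have e3 : μ (t ∩ sᶜ) ≤ ν (t ∩ sᶜ) := by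
    have := h2 (t ∩ sᶜ)
    simpa [Measure.restrict_apply (ht.inter hs.compl), Set.inter_assoc] using this
  calc μ t = μ (t ∩ s) + μ (t ∩ sᶜ) := e1
    _ ≤ (μ (t ∩ s) - ν (t ∩ s) + ν (t ∩ s)) + ν (t ∩ sᶜ) :=
        add_le_add le_tsub_add e3
    _ = μ (t ∩ s) - ν (t ∩ s) + ν t := by rw [e2]; ring
  
lemma add_sub_comm (μ ν : Measure X) [IsFiniteMeasure μ] [IsFiniteMeasure ν] :
    μ + (ν - μ) = (μ - ν) + ν := by
  obtain ⟨s, hs, h1, h2⟩ := exists_hahn μ ν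
  ext t ht
  have e1 : μ t = μ (t ∩ s) + μ (t ∩ sᶜ) := by
    rw [← measure_inter_add_diff t hs, Set.diff_eq]
  have e2 : ν t = ν (t ∩ s) + ν (t ∩ sᶜ) := by
    rw [← measure_inter_add_diff t hs, Set.diff_eq]
  have e3 : μ (t ∩ sᶜ) ≤ ν (t ∩ sᶜ) := by
    have := h2 (t ∩ sᶜ)
    simpa [Measure.restrict_apply (ht.inter hs.compl), Set.inter_assoc] using this
  have e4 : ν (t ∩ s) ≤ μ (t ∩ s) := by
    have := h1 (t ∩ s)
    simpa [Measure.restrict_apply (ht.inter hs), Set.inter_assoc] using this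
  have f1 : (ν - μ) t = ν (t ∩ sᶜ) - μ (t ∩ sᶜ) := by
    have := sub_apply_hahn ν μ hs.compl h2 (by rw [compl_compl]; exact h1) ht
    simpa using this
  have f2 : (μ - ν) t = μ (t ∩ s) - ν (t ∩ s) := sub_apply_hahn μ ν hs h1 h2 ht
  rw [Measure.add_apply, Measure.add_apply, f1, f2, e1, e2]
  have g1 : μ (t ∩ s) + μ (t ∩ sᶜ) + (ν (t ∩ sᶜ) - μ (t ∩ sᶜ)) = μ (t ∩ s) + ν (t ∩ sᶜ) := by
    rw [add_assoc, add_comm (μ (t ∩ sᶜ)), tsub_add_cancel_of_le e3]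
  have g2 : μ (t ∩ s) - ν (t ∩ s) + (ν (t ∩ s) + ν (t ∩ sᶜ)) = μ (t ∩ s) + ν (t ∩ sᶜ) := by
    rw [← add_assoc, tsub_add_cancel_of_le e4]
  rw [g1, g2]

lemma mass_eq_of_univ_eq (μ ν : Measure X) [IsFiniteMeasure μ] [IsFiniteMeasure ν]
    (h : μ Set.univ = ν Set.univ) :
    (μ - ν) Set.univ = (ν - μ) Set.univ := by
  have h2 : μ Set.univ + (ν - μ) Set.univ = (μ - ν) Set.univ + ν Set.univ := by
    simpa using congrArg (fun m : Measure X => m Set.univ) (add_sub_comm μ ν)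
  rw [h] at h2
  have hfin : ν Set.univ ≠ ∞ := measure_ne_top ν _
  rw [add_comm ((μ - ν) Set.univ) (ν Set.univ)] at h2
  exact ((ENNReal.add_right_inj hfin).mp h2).symm

/-- antitone in subtrahend -/
lemma sub_le_sub_left' {μ ν c : Measure X} [IsFiniteMeasure μ] [IsFiniteMeasure c]
    (h : c ≤ ν) : μ - ν ≤ μ - c := by
  apply Measure.sub_le_of_le_add
  calc μ ≤ (μ - c) + c := le_sub_add' μ c
    _ ≤ (μ - c) + ν := add_le_add le_rfl h

lemma sub_add_le_add_sub (a b c d : Measure X) [IsFiniteMeasure a] [IsFiniteMeasure b]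
    [IsFiniteMeasure c] [IsFiniteMeasure d] :
    (a + b) - (c + d) ≤ (a - c) + (b - d) := by
  apply Measure.sub_le_of_le_add
  calc a + b ≤ ((a - c) + c) + ((b - d) + d) := add_le_add (le_sub_add' a c) (le_sub_add' b d)
    _ = (a - c) + (b - d) + (c + d) := add_add_add_comm _ _ _ _


/-! ### Integral lemmas -/

lemma lintegral_g {β : ℝ} (hβ : 0 ≤ β) {V : X → ℝ} (hV0 : ∀ x, 0 ≤ V x)
    (hVmeas : Measurable V) (μ : Measure X) :
    ∫⁻ x, ENNReal.ofReal (1 + β * V x) ∂μ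
      = μ Set.univ + ENNReal.ofReal β * ∫⁻ x, ENNReal.ofReal (V x) ∂μ := by
  have e : ∀ x, ENNReal.ofReal (1 + β * V x)
      = 1 + ENNReal.ofReal β * ENNReal.ofReal (V x) := by
    intro x
    rw [ENNReal.ofReal_add zero_le_one (mul_nonneg hβ (hV0 x)), ENNReal.ofReal_one,
      ENNReal.ofReal_mul hβ]
  simp_rw [e]
  rw [lintegral_add_left measurable_const,
    lintegral_const_mul _ hVmeas.ennreal_ofReal, lintegral_one]

lemma rhoB_eq_add (β : ℝ) (V : X → ℝ) (μ1 μ2 : Measure X) :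
    rhoB β V μ1 μ2 = (∫⁻ x, ENNReal.ofReal (1 + β * V x) ∂(μ1 - μ2))
      + ∫⁻ x, ENNReal.ofReal (1 + β * V x) ∂(μ2 - μ1) := by
  rw [rhoB, tvMeasure, lintegral_add_measure]

lemma rhoB_comm (β : ℝ) (V : X → ℝ) (μ1 μ2 : Measure X) :
    rhoB β V μ1 μ2 = rhoB β V μ2 μ1 := by
  rw [rhoB, rhoB, tvMeasure, tvMeasure, add_comm]

lemma lintegral_V_bind_le {Q : X → Measure X} (hQm : Measurable Q)
    {V : X → ℝ} (hVmeas : Measurable V)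
    {γ' K' : ℝ} (hγ'0 : 0 ≤ γ') (hK'0 : 0 ≤ K') (hV0 : ∀ x, 0 ≤ V x)
    (hLy : ∀ x, ∫⁻ y, ENNReal.ofReal (V y) ∂(Q x) ≤ ENNReal.ofReal (γ' * V x + K'))
    (m : Measure X) :
    ∫⁻ y, ENNReal.ofReal (V y) ∂(m.bind Q)
      ≤ ENNReal.ofReal γ' * (∫⁻ x, ENNReal.ofReal (V x) ∂m) + ENNReal.ofReal K' * m Set.univ := by
  rw [Measure.lintegral_bind hQm.aemeasurable hVmeas.ennreal_ofReal.aemeasurable]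
  calc ∫⁻ x, ∫⁻ y, ENNReal.ofReal (V y) ∂(Q x) ∂m
      ≤ ∫⁻ x, ENNReal.ofReal (γ' * V x + K') ∂m := lintegral_mono hLy
    _ = ∫⁻ x, (ENNReal.ofReal γ' * ENNReal.ofReal (V x) + ENNReal.ofReal K') ∂m := by
        congr 1; funext x
        rw [ENNReal.ofReal_add (mul_nonneg hγ'0 (hV0 x)) hK'0, ENNReal.ofReal_mul hγ'0]
    _ = ENNReal.ofReal γ' * (∫⁻ x, ENNReal.ofReal (V x) ∂m) + ENNReal.ofReal K' * m Set.univ := by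
        rw [lintegral_add_right _ measurable_const,
          lintegral_const_mul _ hVmeas.ennreal_ofReal, lintegral_const]

lemma lintegral_g_bind_le {Q : X → Measure X} (hQm : Measurable Q)
    (hQp : ∀ x, IsProbabilityMeasure (Q x))
    {V : X → ℝ} (hVmeas : Measurable V) (hV0 : ∀ x, 0 ≤ V x)
    {β γ' K' : ℝ} (hβ : 0 ≤ β) (hγ'0 : 0 ≤ γ') (hK'0 : 0 ≤ K')
    (hLy : ∀ x, ∫⁻ y, ENNReal.ofReal (V y) ∂(Q x) ≤ ENNReal.ofReal (γ' * V x + K'))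
    (m : Measure X) :
    ∫⁻ x, ENNReal.ofReal (1 + β * V x) ∂(m.bind Q)
      ≤ m Set.univ + ENNReal.ofReal β *
        (ENNReal.ofReal γ' * (∫⁻ x, ENNReal.ofReal (V x) ∂m) + ENNReal.ofReal K' * m Set.univ) := by
  rw [lintegral_g hβ hV0 hVmeas, bind_univ m hQm hQp]
  exact add_le_add le_rfl (mul_le_mul_right (lintegral_V_bind_le hQm hVmeas hγ'0 hK'0 hV0 hLy m) _)

lemma doeblin_bind {Q : X → Measure X} (hQm : Measurable Q)
    {A : Set X} (hA : MeasurableSet A) {ηs : ℝ} {ν : Measure X}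
    (hDoe : ∀ x ∈ A, ENNReal.ofReal ηs • ν ≤ Q x) (m : Measure X) :
    (ENNReal.ofReal ηs * m A) • ν ≤ (m.restrict A).bind Q := by
  rw [Measure.le_iff]
  intro E hE
  rw [Measure.bind_apply hE hQm.aemeasurable, Measure.smul_apply, smul_eq_mul]
  calc ENNReal.ofReal ηs * m A * ν E = ∫⁻ _ in A, ENNReal.ofReal ηs * ν E ∂m := by
        rw [setLIntegral_const]; ring
    _ ≤ ∫⁻ x in A, Q x E ∂m := by
        refine setLIntegral_mono ((Measure.measurable_coe hE).comp hQm) fun x hx => ?_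
        have := hDoe x hx E
        rwa [Measure.smul_apply, smul_eq_mul] at this
    _ = ∫⁻ x, Q x E ∂(m.restrict A) := rfl

/-- Key: `μ1.bind Q - μ2.bind Q ≤ (μ1 - μ2).bind Q - c` whenever `c ≤ (μ2 - μ1).bind Q`. -/
lemma sub_bind_le (μ1 μ2 : Measure X) [IsFiniteMeasure μ1] [IsFiniteMeasure μ2]
    {Q : X → Measure X} (hQm : Measurable Q) (hQp : ∀ x, IsProbabilityMeasure (Q x))
    {c : Measure X} [IsFiniteMeasure c] (hc : c ≤ (μ2 - μ1).bind Q) :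
    μ1.bind Q - μ2.bind Q ≤ (μ1 - μ2).bind Q - c := by
  haveI := isFinite_bind (μ1 - μ2) hQm hQp
  haveI := isFinite_bind (μ2 - μ1) hQm hQp
  haveI := isFinite_bind μ2 hQm hQp
  apply Measure.sub_le_of_le_add
  have F : μ1.bind Q + (μ2 - μ1).bind Q = (μ1 - μ2).bind Q + μ2.bind Q := by
    rw [← bind_add_meas _ _ hQm, ← bind_add_meas _ _ hQm, add_sub_comm]
  have key : (μ2 - μ1).bind Q + μ1.bind Q
      ≤ (μ2 - μ1).bind Q + (((μ1 - μ2).bind Q - c) + μ2.bind Q) := by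
    rw [add_comm ((μ2 - μ1).bind Q) (μ1.bind Q), F]
    calc (μ1 - μ2).bind Q + μ2.bind Q
        ≤ (((μ1 - μ2).bind Q - c) + c) + μ2.bind Q :=
          add_le_add (le_sub_add' _ c) le_rfl
      _ ≤ (((μ1 - μ2).bind Q - c) + (μ2 - μ1).bind Q) + μ2.bind Q :=
          add_le_add (add_le_add le_rfl hc) le_rfl
      _ = (μ2 - μ1).bind Q + (((μ1 - μ2).bind Q - c) + μ2.bind Q) := by
          rw [add_right_comm]; exact add_comm _ _
  exact Measure.le_of_add_le_add_left key

/-- Expansion bound for a short step. -/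
lemma step_expand {Q : X → Measure X} (hQm : Measurable Q)
    (hQp : ∀ x, IsProbabilityMeasure (Q x))
    {V : X → ℝ} (hVmeas : Measurable V) (hV0 : ∀ x, 0 ≤ V x)
    {β γ' K' C0 : ℝ} (hβ : 0 ≤ β) (hγ'0 : 0 ≤ γ') (hK'0 : 0 ≤ K')
    (hLy : ∀ x, ∫⁻ y, ENNReal.ofReal (V y) ∂(Q x) ≤ ENNReal.ofReal (γ' * V x + K'))
    (hC1 : 1 + β * K' ≤ C0)
    (hC2 : ENNReal.ofReal (β * γ') ≤ ENNReal.ofReal C0 * ENNReal.ofReal β)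
    (μ1 μ2 : Measure X) [IsFiniteMeasure μ1] [IsFiniteMeasure μ2] :
    rhoB β V (μ1.bind Q) (μ2.bind Q) ≤ ENNReal.ofReal C0 * rhoB β V μ1 μ2 := by
  haveI := isFinite_bind (μ1 - μ2) hQm hQp
  haveI := isFinite_bind (μ2 - μ1) hQm hQp
  have hC0 : 0 ≤ C0 := le_trans (by positivity) hC1
  have piece : ∀ m : Measure X,
      ∫⁻ x, ENNReal.ofReal (1 + β * V x) ∂(m.bind Q)
        ≤ ENNReal.ofReal C0 * ∫⁻ x, ENNReal.ofReal (1 + β * V x) ∂m := by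
    intro m
    rw [lintegral_g hβ hV0 hVmeas m]
    have t1 : m Set.univ + ENNReal.ofReal β * ENNReal.ofReal K' * m Set.univ
        ≤ ENNReal.ofReal C0 * m Set.univ := by
      have e : m Set.univ + ENNReal.ofReal β * ENNReal.ofReal K' * m Set.univ
          = (1 + ENNReal.ofReal (β * K')) * m Set.univ := by
        rw [ENNReal.ofReal_mul hβ]; ring
      rw [e]
      refine mul_le_mul_left ?_ _
      rw [← ENNReal.ofReal_one, ← ENNReal.ofReal_add one_pos.le (mul_nonneg hβ hK'0)]
      exact ENNReal.ofReal_le_ofReal hC1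
    have t2 : ENNReal.ofReal β * ENNReal.ofReal γ' * (∫⁻ x, ENNReal.ofReal (V x) ∂m)
        ≤ ENNReal.ofReal C0 * (ENNReal.ofReal β * ∫⁻ x, ENNReal.ofReal (V x) ∂m) := by
      rw [← mul_assoc]
      refine mul_le_mul_left ?_ _
      rwa [← ENNReal.ofReal_mul hβ]
    calc ∫⁻ x, ENNReal.ofReal (1 + β * V x) ∂(m.bind Q)
        ≤ m Set.univ + ENNReal.ofReal β *
          (ENNReal.ofReal γ' * (∫⁻ x, ENNReal.ofReal (V x) ∂m) + ENNReal.ofReal K' * m Set.univ) :=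
          lintegral_g_bind_le hQm hQp hVmeas hV0 hβ hγ'0 hK'0 hLy m
      _ = (m Set.univ + ENNReal.ofReal β * ENNReal.ofReal K' * m Set.univ)
          + ENNReal.ofReal β * ENNReal.ofReal γ' * (∫⁻ x, ENNReal.ofReal (V x) ∂m) := by ring
      _ ≤ ENNReal.ofReal C0 * m Set.univ
          + ENNReal.ofReal C0 * (ENNReal.ofReal β * ∫⁻ x, ENNReal.ofReal (V x) ∂m) :=
          add_le_add t1 t2
      _ = ENNReal.ofReal C0 * (m Set.univ + ENNReal.ofReal β * ∫⁻ x, ENNReal.ofReal (V x) ∂m) := by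
          ring
  have h1 : μ1.bind Q - μ2.bind Q ≤ (μ1 - μ2).bind Q := by
    apply Measure.sub_le_of_le_add
    calc μ1.bind Q ≤ ((μ1 - μ2) + μ2).bind Q := bind_mono_meas (le_sub_add' μ1 μ2) hQm
      _ = (μ1 - μ2).bind Q + μ2.bind Q := bind_add_meas _ _ hQm
  have h2 : μ2.bind Q - μ1.bind Q ≤ (μ2 - μ1).bind Q := by
    apply Measure.sub_le_of_le_add
    calc μ2.bind Q ≤ ((μ2 - μ1) + μ1).bind Q := bind_mono_meas (le_sub_add' μ2 μ1) hQm
      _ = (μ2 - μ1).bind Q + μ1.bind Q := bind_add_meas _ _ hQm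
  calc rhoB β V (μ1.bind Q) (μ2.bind Q)
      = (∫⁻ x, ENNReal.ofReal (1 + β * V x) ∂(μ1.bind Q - μ2.bind Q))
        + ∫⁻ x, ENNReal.ofReal (1 + β * V x) ∂(μ2.bind Q - μ1.bind Q) := rhoB_eq_add _ _ _ _
    _ ≤ (∫⁻ x, ENNReal.ofReal (1 + β * V x) ∂((μ1 - μ2).bind Q))
        + ∫⁻ x, ENNReal.ofReal (1 + β * V x) ∂((μ2 - μ1).bind Q) :=
        add_le_add (lintegral_mono' h1 le_rfl) (lintegral_mono' h2 le_rfl)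
    _ ≤ ENNReal.ofReal C0 * (∫⁻ x, ENNReal.ofReal (1 + β * V x) ∂(μ1 - μ2))
        + ENNReal.ofReal C0 * ∫⁻ x, ENNReal.ofReal (1 + β * V x) ∂(μ2 - μ1) :=
        add_le_add (piece _) (piece _)
    _ = ENNReal.ofReal C0 * rhoB β V μ1 μ2 := by rw [rhoB_eq_add, mul_add]


lemma smul_meas_mono_left {c d : ℝ≥0∞} (h : c ≤ d) (m : Measure X) : c • m ≤ d • m := by
  rw [Measure.le_iff']
  intro s
  rw [Measure.smul_apply, Measure.smul_apply, smul_eq_mul, smul_eq_mul]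
  exact mul_le_mul_left h _

lemma smul_meas_mono_right (c : ℝ≥0∞) {m m' : Measure X} (h : m ≤ m') : c • m ≤ c • m' := by
  rw [Measure.le_iff']
  intro s
  rw [Measure.smul_apply, Measure.smul_apply, smul_eq_mul, smul_eq_mul]
  exact mul_le_mul_right (h s) _

lemma isFinite_smul {c : ℝ≥0∞} (hc : c ≠ ∞) (ν : Measure X) [IsFiniteMeasure ν] :
    IsFiniteMeasure (c • ν) :=
  ⟨by rw [Measure.smul_apply, smul_eq_mul]
      exact ENNReal.mul_lt_top hc.lt_top (measure_lt_top ν _)⟩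

lemma one_le_lintegral_g {β : ℝ} (hβ : 0 ≤ β) {V : X → ℝ} (hV0 : ∀ x, 0 ≤ V x)
    (ν : Measure X) [IsProbabilityMeasure ν] :
    1 ≤ ∫⁻ x, ENNReal.ofReal (1 + β * V x) ∂ν := by
  calc (1 : ℝ≥0∞) = ∫⁻ _, 1 ∂ν := by rw [lintegral_one, measure_univ]
    _ ≤ ∫⁻ x, ENNReal.ofReal (1 + β * V x) ∂ν := by
        refine lintegral_mono fun x => ?_
        rw [← ENNReal.ofReal_one]
        exact ENNReal.ofReal_le_ofReal (by nlinarith [hV0 x])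

/-- Bracket 1: the Doeblin-contracted piece. -/
lemma bracket1_piece {Q : X → Measure X} (hQm : Measurable Q)
    (hQp : ∀ x, IsProbabilityMeasure (Q x))
    {V : X → ℝ} (hVmeas : Measurable V) (hV0 : ∀ x, 0 ≤ V x)
    {β γ' K' ηs α : ℝ} (hβ : 0 ≤ β) (hγ'0 : 0 ≤ γ') (hK'0 : 0 ≤ K') (hηs : 0 ≤ ηs)
    (hc1 : 1 + β * K' ≤ α + ηs) (hc2 : γ' ≤ α)
    (hLy : ∀ x, ∫⁻ y, ENNReal.ofReal (V y) ∂(Q x) ≤ ENNReal.ofReal (γ' * V x + K'))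
    {ν : Measure X} [IsProbabilityMeasure ν]
    (m : Measure X) [IsFiniteMeasure m]
    (hc : (ENNReal.ofReal ηs * m Set.univ) • ν ≤ m.bind Q) :
    ∫⁻ x, ENNReal.ofReal (1 + β * V x) ∂(m.bind Q - (ENNReal.ofReal ηs * m Set.univ) • ν)
      ≤ ENNReal.ofReal α * ∫⁻ x, ENNReal.ofReal (1 + β * V x) ∂m := by
  have hα0 : 0 ≤ α := le_trans hγ'0 hc2
  haveI := isFinite_bind m hQm hQp
  have hEfin : ENNReal.ofReal ηs * m Set.univ ≠ ∞ :=
    (ENNReal.mul_lt_top ENNReal.ofReal_lt_top (measure_lt_top m _)).ne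
  haveI : IsFiniteMeasure ((ENNReal.ofReal ηs * m Set.univ) • ν) := isFinite_smul hEfin ν
  set c : Measure X := (ENNReal.ofReal ηs * m Set.univ) • ν with hcdef
  have hsum : (m.bind Q - c) + c = m.bind Q := Measure.sub_add_cancel_of_le hc
  have hint : (∫⁻ x, ENNReal.ofReal (1 + β * V x) ∂(m.bind Q - c))
      + ∫⁻ x, ENNReal.ofReal (1 + β * V x) ∂c
      = ∫⁻ x, ENNReal.ofReal (1 + β * V x) ∂(m.bind Q) := by
    rw [← lintegral_add_measure, hsum]
  have hgc : ENNReal.ofReal ηs * m Set.univ ≤ ∫⁻ x, ENNReal.ofReal (1 + β * V x) ∂c := by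
    rw [hcdef, lintegral_smul_measure]
    calc ENNReal.ofReal ηs * m Set.univ
        = ENNReal.ofReal ηs * m Set.univ * 1 := (mul_one _).symm
      _ ≤ _ := mul_le_mul_right (one_le_lintegral_g hβ hV0 ν) _
  -- key numeric bound
  have hnum : ∫⁻ x, ENNReal.ofReal (1 + β * V x) ∂(m.bind Q)
      ≤ ENNReal.ofReal α * (∫⁻ x, ENNReal.ofReal (1 + β * V x) ∂m)
        + ENNReal.ofReal ηs * m Set.univ := by
    rw [lintegral_g hβ hV0 hVmeas m]
    have t1 : m Set.univ + ENNReal.ofReal β * ENNReal.ofReal K' * m Set.univ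
        ≤ ENNReal.ofReal α * m Set.univ + ENNReal.ofReal ηs * m Set.univ := by
      have e : m Set.univ + ENNReal.ofReal β * ENNReal.ofReal K' * m Set.univ
          = (1 + ENNReal.ofReal (β * K')) * m Set.univ := by
        rw [ENNReal.ofReal_mul hβ]; ring
      have e2 : ENNReal.ofReal α * m Set.univ + ENNReal.ofReal ηs * m Set.univ
          = (ENNReal.ofReal α + ENNReal.ofReal ηs) * m Set.univ := by ring
      rw [e, e2]
      refine mul_le_mul_left ?_ _
      rw [← ENNReal.ofReal_one, ← ENNReal.ofReal_add one_pos.le (mul_nonneg hβ hK'0),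
        ← ENNReal.ofReal_add hα0 hηs]
      exact ENNReal.ofReal_le_ofReal hc1
    have t2 : ENNReal.ofReal β * ENNReal.ofReal γ' * (∫⁻ x, ENNReal.ofReal (V x) ∂m)
        ≤ ENNReal.ofReal α * (ENNReal.ofReal β * ∫⁻ x, ENNReal.ofReal (V x) ∂m) := by
      rw [← mul_assoc]
      refine mul_le_mul_left ?_ _
      rw [← ENNReal.ofReal_mul hβ, ← ENNReal.ofReal_mul hα0]
      exact ENNReal.ofReal_le_ofReal (by nlinarith)
    calc ∫⁻ x, ENNReal.ofReal (1 + β * V x) ∂(m.bind Q)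
        ≤ m Set.univ + ENNReal.ofReal β *
          (ENNReal.ofReal γ' * (∫⁻ x, ENNReal.ofReal (V x) ∂m) + ENNReal.ofReal K' * m Set.univ) :=
          lintegral_g_bind_le hQm hQp hVmeas hV0 hβ hγ'0 hK'0 hLy m
      _ = (m Set.univ + ENNReal.ofReal β * ENNReal.ofReal K' * m Set.univ)
          + ENNReal.ofReal β * ENNReal.ofReal γ' * (∫⁻ x, ENNReal.ofReal (V x) ∂m) := by ring
      _ ≤ (ENNReal.ofReal α * m Set.univ + ENNReal.ofReal ηs * m Set.univ)
          + ENNReal.ofReal α * (ENNReal.ofReal β * ∫⁻ x, ENNReal.ofReal (V x) ∂m) :=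
          add_le_add t1 t2
      _ = ENNReal.ofReal α * (m Set.univ + ENNReal.ofReal β * ∫⁻ x, ENNReal.ofReal (V x) ∂m)
          + ENNReal.ofReal ηs * m Set.univ := by ring
  refine (ENNReal.add_le_add_iff_right hEfin).mp ?_
  calc (∫⁻ x, ENNReal.ofReal (1 + β * V x) ∂(m.bind Q - c)) + ENNReal.ofReal ηs * m Set.univ
      ≤ (∫⁻ x, ENNReal.ofReal (1 + β * V x) ∂(m.bind Q - c))
        + ∫⁻ x, ENNReal.ofReal (1 + β * V x) ∂c := add_le_add le_rfl hgc
    _ = ∫⁻ x, ENNReal.ofReal (1 + β * V x) ∂(m.bind Q) := hint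
    _ ≤ ENNReal.ofReal α * (∫⁻ x, ENNReal.ofReal (1 + β * V x) ∂m)
        + ENNReal.ofReal ηs * m Set.univ := hnum

/-- Bracket 2: the piece living (half) outside the small set. -/
lemma bracket2 {Q : X → Measure X} (hQm : Measurable Q)
    (hQp : ∀ x, IsProbabilityMeasure (Q x))
    {V : X → ℝ} (hVmeas : Measurable V) (hV0 : ∀ x, 0 ≤ V x)
    {R β γ' K' α : ℝ} (hβ : 0 ≤ β) (hγ'0 : 0 ≤ γ') (hK'0 : 0 ≤ K') (hR : 0 ≤ R)
    (hLy : ∀ x, ∫⁻ y, ENNReal.ofReal (V y) ∂(Q x) ≤ ENNReal.ofReal (γ' * V x + K'))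
    (hc2 : γ' ≤ α)
    (hc3 : 2 + 2 * (β * K') + β * γ' * R ≤ α * (2 + β * R))
    (m1 m2 : Measure X) [IsFiniteMeasure m1] [IsFiniteMeasure m2]
    (hMeq : m2 Set.univ = m1 Set.univ)
    (hS : ENNReal.ofReal R * m1 Set.univ ≤ ∫⁻ x, ENNReal.ofReal (V x) ∂m1) :
    (∫⁻ x, ENNReal.ofReal (1 + β * V x) ∂(m1.bind Q))
      + ∫⁻ x, ENNReal.ofReal (1 + β * V x) ∂(m2.bind Q)
      ≤ ENNReal.ofReal α * ((∫⁻ x, ENNReal.ofReal (1 + β * V x) ∂m1)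
        + ∫⁻ x, ENNReal.ofReal (1 + β * V x) ∂m2) := by
  have hα0 : 0 ≤ α := le_trans hγ'0 hc2
  set M : ℝ≥0∞ := m1 Set.univ with hMdef
  set S1 : ℝ≥0∞ := ∫⁻ x, ENNReal.ofReal (V x) ∂m1 with hS1def
  set S2 : ℝ≥0∞ := ∫⁻ x, ENNReal.ofReal (V x) ∂m2 with hS2def
  have hW : ENNReal.ofReal R * M ≤ S1 + S2 := hS.trans le_self_add
  set W' : ℝ≥0∞ := (S1 + S2) - ENNReal.ofReal R * M with hW'def
  have hWsp : ENNReal.ofReal R * M + W' = S1 + S2 := add_tsub_cancel_of_le hW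
  have collapse : (1 : ℝ≥0∞) + 1 + ENNReal.ofReal β * ENNReal.ofReal K'
      + ENNReal.ofReal β * ENNReal.ofReal K'
      + ENNReal.ofReal β * ENNReal.ofReal γ' * ENNReal.ofReal R
      = ENNReal.ofReal (1 + 1 + β * K' + β * K' + β * γ' * R) := by
    rw [← ENNReal.ofReal_mul hβ, ← ENNReal.ofReal_mul hβ,
      ← ENNReal.ofReal_mul (mul_nonneg hβ hγ'0),
      ← ENNReal.ofReal_one,
      ← ENNReal.ofReal_add (by norm_num) (by positivity),
      ← ENNReal.ofReal_add (by positivity) (by positivity),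
      ← ENNReal.ofReal_add (by positivity) (by positivity),
      ← ENNReal.ofReal_add (by positivity) (by positivity)]
  have c1 : M + M + ENNReal.ofReal β * ENNReal.ofReal K' * M
      + ENNReal.ofReal β * ENNReal.ofReal K' * M
      + ENNReal.ofReal β * ENNReal.ofReal γ' * (ENNReal.ofReal R * M)
      ≤ ENNReal.ofReal (α * (2 + β * R)) * M := by
    have e : M + M + ENNReal.ofReal β * ENNReal.ofReal K' * M
        + ENNReal.ofReal β * ENNReal.ofReal K' * M
        + ENNReal.ofReal β * ENNReal.ofReal γ' * (ENNReal.ofReal R * M)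
        = ((1 : ℝ≥0∞) + 1 + ENNReal.ofReal β * ENNReal.ofReal K'
          + ENNReal.ofReal β * ENNReal.ofReal K'
          + ENNReal.ofReal β * ENNReal.ofReal γ' * ENNReal.ofReal R) * M := by ring
    rw [e, collapse]
    exact mul_le_mul_left (ENNReal.ofReal_le_ofReal (by linarith)) _
  have c2 : ENNReal.ofReal β * ENNReal.ofReal γ' * W'
      ≤ ENNReal.ofReal α * ENNReal.ofReal β * W' := by
    refine mul_le_mul_left ?_ _
    rw [← ENNReal.ofReal_mul hβ, ← ENNReal.ofReal_mul hα0]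
    exact ENNReal.ofReal_le_ofReal (by nlinarith)
  have expand : ENNReal.ofReal (α * (2 + β * R))
      = ENNReal.ofReal α * (1 + 1 + ENNReal.ofReal β * ENNReal.ofReal R) := by
    rw [ENNReal.ofReal_mul hα0, ← ENNReal.ofReal_mul hβ, ← ENNReal.ofReal_one,
      ← ENNReal.ofReal_add (by norm_num) (by positivity),
      ← ENNReal.ofReal_add (by norm_num) (by positivity)]
    norm_num
  calc (∫⁻ x, ENNReal.ofReal (1 + β * V x) ∂(m1.bind Q))
      + ∫⁻ x, ENNReal.ofReal (1 + β * V x) ∂(m2.bind Q)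
      ≤ (M + ENNReal.ofReal β * (ENNReal.ofReal γ' * S1 + ENNReal.ofReal K' * M))
        + (M + ENNReal.ofReal β * (ENNReal.ofReal γ' * S2 + ENNReal.ofReal K' * M)) := by
        refine add_le_add ?_ ?_
        · exact lintegral_g_bind_le hQm hQp hVmeas hV0 hβ hγ'0 hK'0 hLy m1
        · have := lintegral_g_bind_le hQm hQp hVmeas hV0 hβ hγ'0 hK'0 hLy m2
          rwa [hMeq] at this
    _ = (M + M + ENNReal.ofReal β * ENNReal.ofReal K' * M
        + ENNReal.ofReal β * ENNReal.ofReal K' * M)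
        + ENNReal.ofReal β * ENNReal.ofReal γ' * (S1 + S2) := by ring
    _ = M + M + ENNReal.ofReal β * ENNReal.ofReal K' * M
        + ENNReal.ofReal β * ENNReal.ofReal K' * M
        + ENNReal.ofReal β * ENNReal.ofReal γ' * (ENNReal.ofReal R * M)
        + ENNReal.ofReal β * ENNReal.ofReal γ' * W' := by rw [← hWsp]; ring
    _ ≤ ENNReal.ofReal (α * (2 + β * R)) * M + ENNReal.ofReal α * ENNReal.ofReal β * W' :=
        add_le_add c1 c2
    _ = ENNReal.ofReal α * ((M + M + ENNReal.ofReal β * (ENNReal.ofReal R * M))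
        + ENNReal.ofReal β * W') := by rw [expand]; ring
    _ = ENNReal.ofReal α * (M + M + ENNReal.ofReal β * (S1 + S2)) := by rw [← hWsp]; ring
    _ = ENNReal.ofReal α * ((∫⁻ x, ENNReal.ofReal (1 + β * V x) ∂m1)
        + ∫⁻ x, ENNReal.ofReal (1 + β * V x) ∂m2) := by
        rw [lintegral_g hβ hV0 hVmeas m1, lintegral_g hβ hV0 hVmeas m2, hMeq]
        ring

/-- One-step contraction with a global Doeblin condition (used when `h Δ = 0`, `β = 0`). -/
lemma step_contract_global {Q : X → Measure X} (hQm : Measurable Q)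
    (hQp : ∀ x, IsProbabilityMeasure (Q x))
    {V : X → ℝ} (hVmeas : Measurable V) (hV0 : ∀ x, 0 ≤ V x)
    {ηs α : ℝ} (hηs : 0 ≤ ηs) (hα0 : 0 ≤ α) (hα : 1 ≤ α + ηs)
    {ν : Measure X} [IsProbabilityMeasure ν]
    (hDoe : ∀ x, ENNReal.ofReal ηs • ν ≤ Q x)
    (μ1 μ2 : Measure X) [IsProbabilityMeasure μ1] [IsProbabilityMeasure μ2] :
    rhoB 0 V (μ1.bind Q) (μ2.bind Q) ≤ ENNReal.ofReal α * rhoB 0 V μ1 μ2 := by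
  have g0 : ∀ m : Measure X, ∫⁻ x, ENNReal.ofReal (1 + (0:ℝ) * V x) ∂m = m Set.univ := by
    intro m; simp
  set p : ℝ≥0∞ := (μ1 - μ2) Set.univ with hpdef
  have hp2 : (μ2 - μ1) Set.univ = p :=
    mass_eq_of_univ_eq μ2 μ1 (by simp [measure_univ])
  have hpfin : ENNReal.ofReal ηs * p ≠ ∞ :=
    (ENNReal.mul_lt_top ENNReal.ofReal_lt_top (measure_lt_top _ _)).ne
  set c : Measure X := (ENNReal.ofReal ηs * p) • ν with hcdef
  haveI : IsFiniteMeasure c := isFinite_smul hpfin ν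
  haveI := isFinite_bind (μ1 - μ2) hQm hQp
  haveI := isFinite_bind (μ2 - μ1) hQm hQp
  have hcP : c ≤ (μ1 - μ2).bind Q := by
    have := doeblin_bind hQm MeasurableSet.univ (fun x _ => hDoe x) (μ1 - μ2)
    rwa [Measure.restrict_univ] at this
  have hcM : c ≤ (μ2 - μ1).bind Q := by
    have := doeblin_bind hQm MeasurableSet.univ (fun x _ => hDoe x) (μ2 - μ1)
    rwa [Measure.restrict_univ, hp2] at this
  have h1 : μ1.bind Q - μ2.bind Q ≤ (μ1 - μ2).bind Q - c := sub_bind_le μ1 μ2 hQm hQp hcM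
  have h2 : μ2.bind Q - μ1.bind Q ≤ (μ2 - μ1).bind Q - c := sub_bind_le μ2 μ1 hQm hQp hcP
  have piece : ∀ m : Measure X, IsFiniteMeasure m → m Set.univ = p → c ≤ m.bind Q →
      (m.bind Q - c) Set.univ ≤ ENNReal.ofReal α * p := by
    intro m hmf hmu hcm
    haveI := hmf
    haveI := isFinite_bind m hQm hQp
    rw [Measure.sub_apply MeasurableSet.univ hcm, bind_univ m hQm hQp, hmu]
    have hcu : c Set.univ = ENNReal.ofReal ηs * p := by
      rw [hcdef, Measure.smul_apply, smul_eq_mul, measure_univ, mul_one]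
    rw [hcu]
    rw [tsub_le_iff_right]
    calc p = 1 * p := (one_mul p).symm
      _ ≤ ENNReal.ofReal (α + ηs) * p := by
          refine mul_le_mul_left ?_ _
          exact ENNReal.one_le_ofReal.mpr hα
      _ = ENNReal.ofReal α * p + ENNReal.ofReal ηs * p := by
          rw [ENNReal.ofReal_add hα0 hηs]; ring
  calc rhoB 0 V (μ1.bind Q) (μ2.bind Q)
      = (μ1.bind Q - μ2.bind Q) Set.univ + (μ2.bind Q - μ1.bind Q) Set.univ := by
        rw [rhoB_eq_add, g0, g0]
    _ ≤ ((μ1 - μ2).bind Q - c) Set.univ + ((μ2 - μ1).bind Q - c) Set.univ :=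
        add_le_add (h1 Set.univ) (h2 Set.univ)
    _ ≤ ENNReal.ofReal α * p + ENNReal.ofReal α * p := by
        refine add_le_add ?_ ?_
        · exact piece _ inferInstance rfl hcP
        · exact piece _ inferInstance hp2 hcM
    _ = ENNReal.ofReal α * rhoB 0 V μ1 μ2 := by
        rw [rhoB_eq_add, g0, g0, hp2, mul_add]

/-- One-step contraction (asymmetric version). -/
lemma step_contract_aux {Q : X → Measure X} (hQm : Measurable Q)
    (hQp : ∀ x, IsProbabilityMeasure (Q x))
    {V : X → ℝ} (hVmeas : Measurable V) (hV0 : ∀ x, 0 ≤ V x)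
    {R β γ' K' ηs α : ℝ}
    (hβ : 0 ≤ β) (hηs : 0 ≤ ηs) (hγ'0 : 0 ≤ γ') (hK'0 : 0 ≤ K') (hR : 0 ≤ R)
    {ν : Measure X} [IsProbabilityMeasure ν]
    (hLy : ∀ x, ∫⁻ y, ENNReal.ofReal (V y) ∂(Q x) ≤ ENNReal.ofReal (γ' * V x + K'))
    (hDoe : ∀ x, V x ≤ R → ENNReal.ofReal ηs • ν ≤ Q x)
    (hc1 : 1 + β * K' ≤ α + ηs) (hc2 : γ' ≤ α)
    (hc3 : 2 + 2 * (β * K') + β * γ' * R ≤ α * (2 + β * R))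
    (μ1 μ2 : Measure X) [IsProbabilityMeasure μ1] [IsProbabilityMeasure μ2]
    (hAmin : (μ1 - μ2) (V ⁻¹' Set.Iic R) ≤ (μ2 - μ1) (V ⁻¹' Set.Iic R)) :
    rhoB β V (μ1.bind Q) (μ2.bind Q) ≤ ENNReal.ofReal α * rhoB β V μ1 μ2 := by
  have hα0 : 0 ≤ α := le_trans hγ'0 hc2
  set A : Set X := V ⁻¹' Set.Iic R with hAdef
  have hA : MeasurableSet A := hVmeas measurableSet_Iic
  set κ : Measure X := (μ1 - μ2).restrict A with hκdef
  set b : Measure X := (μ1 - μ2).restrict Aᶜ with hbdef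
  set r : ℝ≥0∞ := (μ1 - μ2) A / (μ2 - μ1) A with hrdef
  set σ : Measure X := r • ((μ2 - μ1).restrict A) with hσdef
  have hr1 : r ≤ 1 := ENNReal.div_le_of_le_mul (by rw [one_mul]; exact hAmin)
  have hσ_leA : σ ≤ (μ2 - μ1).restrict A := by
    rw [Measure.le_iff']
    intro E
    calc σ E = r * (μ2 - μ1).restrict A E := by rw [hσdef, Measure.smul_apply, smul_eq_mul]
      _ ≤ 1 * (μ2 - μ1).restrict A E := mul_le_mul_left hr1 _
      _ = _ := one_mul _
  have hσ_le : σ ≤ (μ2 - μ1) := hσ_leA.trans Measure.restrict_le_self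
  haveI : IsFiniteMeasure σ := isFiniteMeasure_of_le _ hσ_le
  set τ : Measure X := (μ2 - μ1) - σ with hτdef
  have hστ : σ + τ = (μ2 - μ1) := by
    rw [hτdef, add_comm]; exact Measure.sub_add_cancel_of_le hσ_le
  have hraM : r * (μ2 - μ1) A = (μ1 - μ2) A := by
    rcases eq_or_ne ((μ2 - μ1) A) 0 with h0 | h0
    · have hap : (μ1 - μ2) A = 0 := le_antisymm (h0 ▸ hAmin) zero_le
      rw [h0, hap, mul_zero]
    · rw [hrdef]; exact ENNReal.div_mul_cancel h0 (measure_ne_top _ _)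
  have hσ_univ : σ Set.univ = (μ1 - μ2) A := by
    rw [hσdef, Measure.smul_apply, smul_eq_mul, Measure.restrict_apply_univ]
    exact hraM
  have hκ_univ : κ Set.univ = (μ1 - μ2) A := by rw [hκdef, Measure.restrict_apply_univ]
  have hmass : (μ2 - μ1) Set.univ = (μ1 - μ2) Set.univ :=
    mass_eq_of_univ_eq μ2 μ1 (by simp [measure_univ])
  -- equal residual masses
  have hMeq : τ Set.univ = b Set.univ := by
    have e1 : κ Set.univ + b Set.univ = (μ1 - μ2) Set.univ := by
      rw [hκdef, hbdef, Measure.restrict_apply_univ, Measure.restrict_apply_univ,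
        measure_add_measure_compl hA]
    have e2 : σ Set.univ + τ Set.univ = (μ1 - μ2) Set.univ := by
      rw [← hmass, ← hστ]; rfl
    rw [hσ_univ] at e2
    rw [hκ_univ] at e1
    rw [← e1] at e2
    exact (ENNReal.add_right_inj (measure_ne_top _ _)).mp e2
  -- V-mass lower bound on b
  have hSb : ENNReal.ofReal R * b Set.univ ≤ ∫⁻ x, ENNReal.ofReal (V x) ∂b := by
    rw [hbdef, Measure.restrict_apply_univ]
    calc ENNReal.ofReal R * (μ1 - μ2) Aᶜ
        = ∫⁻ _ in Aᶜ, ENNReal.ofReal R ∂(μ1 - μ2) := by rw [setLIntegral_const, mul_comm]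
      _ ≤ ∫⁻ x in Aᶜ, ENNReal.ofReal (V x) ∂(μ1 - μ2) := by
          refine setLIntegral_mono hVmeas.ennreal_ofReal fun x hx => ?_
          refine ENNReal.ofReal_le_ofReal ?_
          have : ¬ V x ≤ R := hx
          linarith
      _ = ∫⁻ x, ENNReal.ofReal (V x) ∂((μ1 - μ2).restrict Aᶜ) := rfl
  -- the Doeblin piece
  have hDoeA : ∀ x ∈ A, ENNReal.ofReal ηs • ν ≤ Q x := fun x hx => hDoe x hx
  set c : Measure X := (ENNReal.ofReal ηs * (μ1 - μ2) A) • ν with hcdef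
  have hcfin : ENNReal.ofReal ηs * (μ1 - μ2) A ≠ ∞ :=
    (ENNReal.mul_lt_top ENNReal.ofReal_lt_top (measure_lt_top _ _)).ne
  haveI : IsFiniteMeasure c := isFinite_smul hcfin ν
  have hcκ : c ≤ κ.bind Q := by
    rw [hcdef, hκdef]; exact doeblin_bind hQm hA hDoeA (μ1 - μ2)
  have hcσ : c ≤ σ.bind Q := by
    rw [hσdef, bind_smul_meas _ _ hQm]
    have e : c = r • ((ENNReal.ofReal ηs * (μ2 - μ1) A) • ν) := by
      rw [hcdef, smul_smul, ← hraM]; ring_nf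
    rw [e]
    exact smul_meas_mono_right r (doeblin_bind hQm hA hDoeA (μ2 - μ1))
  -- finiteness instances for bind measures
  haveI := isFinite_bind κ hQm hQp
  haveI := isFinite_bind b hQm hQp
  haveI := isFinite_bind σ hQm hQp
  haveI := isFinite_bind τ hQm hQp
  haveI := isFinite_bind (μ1 - μ2) hQm hQp
  haveI := isFinite_bind (μ2 - μ1) hQm hQp
  -- measure-level comparison
  have hsplit1 : (μ1 - μ2).bind Q = κ.bind Q + b.bind Q := by
    rw [hκdef, hbdef, ← bind_add_meas _ _ hQm, Measure.restrict_add_restrict_compl hA]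
  have hsplit2 : (μ2 - μ1).bind Q = σ.bind Q + τ.bind Q := by
    rw [← bind_add_meas _ _ hQm, hστ]
  have h1 : μ1.bind Q - μ2.bind Q ≤ (κ.bind Q - c) + b.bind Q := by
    calc μ1.bind Q - μ2.bind Q ≤ (μ1 - μ2).bind Q - (μ2 - μ1).bind Q :=
          sub_bind_le μ1 μ2 hQm hQp le_rfl
      _ = (κ.bind Q + b.bind Q) - (σ.bind Q + τ.bind Q) := by rw [hsplit1, hsplit2]
      _ ≤ (κ.bind Q - σ.bind Q) + (b.bind Q - τ.bind Q) := sub_add_le_add_sub _ _ _ _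
      _ ≤ (κ.bind Q - c) + b.bind Q := add_le_add (sub_le_sub_left' hcσ) Measure.sub_le
  have h2 : μ2.bind Q - μ1.bind Q ≤ (σ.bind Q - c) + τ.bind Q := by
    calc μ2.bind Q - μ1.bind Q ≤ (μ2 - μ1).bind Q - (μ1 - μ2).bind Q :=
          sub_bind_le μ2 μ1 hQm hQp le_rfl
      _ = (σ.bind Q + τ.bind Q) - (κ.bind Q + b.bind Q) := by rw [hsplit1, hsplit2]
      _ ≤ (σ.bind Q - κ.bind Q) + (τ.bind Q - b.bind Q) := sub_add_le_add_sub _ _ _ _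
      _ ≤ (σ.bind Q - c) + τ.bind Q := add_le_add (sub_le_sub_left' hcκ) Measure.sub_le
  -- bracket bounds
  have B1κ : ∫⁻ x, ENNReal.ofReal (1 + β * V x) ∂(κ.bind Q - c)
      ≤ ENNReal.ofReal α * ∫⁻ x, ENNReal.ofReal (1 + β * V x) ∂κ := by
    have := bracket1_piece hQm hQp hVmeas hV0 hβ hγ'0 hK'0 hηs hc1 hc2 hLy κ
      (by rw [hκ_univ]; exact hcκ)
    rwa [hκ_univ] at this
  have B1σ : ∫⁻ x, ENNReal.ofReal (1 + β * V x) ∂(σ.bind Q - c)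
      ≤ ENNReal.ofReal α * ∫⁻ x, ENNReal.ofReal (1 + β * V x) ∂σ := by
    have := bracket1_piece hQm hQp hVmeas hV0 hβ hγ'0 hK'0 hηs hc1 hc2 hLy σ
      (by rw [hσ_univ]; exact hcσ)
    rwa [hσ_univ] at this
  have B2 : (∫⁻ x, ENNReal.ofReal (1 + β * V x) ∂(b.bind Q))
      + ∫⁻ x, ENNReal.ofReal (1 + β * V x) ∂(τ.bind Q)
      ≤ ENNReal.ofReal α * ((∫⁻ x, ENNReal.ofReal (1 + β * V x) ∂b)
        + ∫⁻ x, ENNReal.ofReal (1 + β * V x) ∂τ) :=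
    bracket2 hQm hQp hVmeas hV0 hβ hγ'0 hK'0 hR hLy hc2 hc3 b τ hMeq hSb
  -- final assembly
  calc rhoB β V (μ1.bind Q) (μ2.bind Q)
      = (∫⁻ x, ENNReal.ofReal (1 + β * V x) ∂(μ1.bind Q - μ2.bind Q))
        + ∫⁻ x, ENNReal.ofReal (1 + β * V x) ∂(μ2.bind Q - μ1.bind Q) := rhoB_eq_add _ _ _ _
    _ ≤ (∫⁻ x, ENNReal.ofReal (1 + β * V x) ∂((κ.bind Q - c) + b.bind Q))
        + ∫⁻ x, ENNReal.ofReal (1 + β * V x) ∂((σ.bind Q - c) + τ.bind Q) :=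
        add_le_add (lintegral_mono' h1 le_rfl) (lintegral_mono' h2 le_rfl)
    _ = ((∫⁻ x, ENNReal.ofReal (1 + β * V x) ∂(κ.bind Q - c))
        + ∫⁻ x, ENNReal.ofReal (1 + β * V x) ∂(σ.bind Q - c))
        + ((∫⁻ x, ENNReal.ofReal (1 + β * V x) ∂(b.bind Q))
        + ∫⁻ x, ENNReal.ofReal (1 + β * V x) ∂(τ.bind Q)) := by
        rw [lintegral_add_measure, lintegral_add_measure]; ring
    _ ≤ (ENNReal.ofReal α * (∫⁻ x, ENNReal.ofReal (1 + β * V x) ∂κ)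
        + ENNReal.ofReal α * (∫⁻ x, ENNReal.ofReal (1 + β * V x) ∂σ))
        + ENNReal.ofReal α * ((∫⁻ x, ENNReal.ofReal (1 + β * V x) ∂b)
        + ∫⁻ x, ENNReal.ofReal (1 + β * V x) ∂τ) :=
        add_le_add (add_le_add B1κ B1σ) B2
    _ = ENNReal.ofReal α * (((∫⁻ x, ENNReal.ofReal (1 + β * V x) ∂κ)
        + ∫⁻ x, ENNReal.ofReal (1 + β * V x) ∂b)
        + ((∫⁻ x, ENNReal.ofReal (1 + β * V x) ∂σ)
        + ∫⁻ x, ENNReal.ofReal (1 + β * V x) ∂τ)) := by ring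
    _ = ENNReal.ofReal α * rhoB β V μ1 μ2 := by
        rw [rhoB_eq_add]
        congr 1
        rw [← lintegral_add_measure, ← lintegral_add_measure, hστ, hκdef, hbdef,
          Measure.restrict_add_restrict_compl hA]

/-- One-step contraction. -/
lemma step_contract {Q : X → Measure X} (hQm : Measurable Q)
    (hQp : ∀ x, IsProbabilityMeasure (Q x))
    {V : X → ℝ} (hVmeas : Measurable V) (hV0 : ∀ x, 0 ≤ V x)
    {R β γ' K' ηs α : ℝ}
    (hβ : 0 ≤ β) (hηs : 0 ≤ ηs) (hγ'0 : 0 ≤ γ') (hK'0 : 0 ≤ K') (hR : 0 ≤ R)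
    {ν : Measure X} [IsProbabilityMeasure ν]
    (hLy : ∀ x, ∫⁻ y, ENNReal.ofReal (V y) ∂(Q x) ≤ ENNReal.ofReal (γ' * V x + K'))
    (hDoe : ∀ x, V x ≤ R → ENNReal.ofReal ηs • ν ≤ Q x)
    (hc1 : 1 + β * K' ≤ α + ηs) (hc2 : γ' ≤ α)
    (hc3 : 2 + 2 * (β * K') + β * γ' * R ≤ α * (2 + β * R))
    (μ1 μ2 : Measure X) [IsProbabilityMeasure μ1] [IsProbabilityMeasure μ2] :
    rhoB β V (μ1.bind Q) (μ2.bind Q) ≤ ENNReal.ofReal α * rhoB β V μ1 μ2 := by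
  rcases le_total ((μ1 - μ2) (V ⁻¹' Set.Iic R)) ((μ2 - μ1) (V ⁻¹' Set.Iic R)) with hc | hc
  · exact step_contract_aux hQm hQp hVmeas hV0 hβ hηs hγ'0 hK'0 hR hLy hDoe hc1 hc2 hc3
      μ1 μ2 hc
  · rw [rhoB_comm β V (μ1.bind Q) (μ2.bind Q), rhoB_comm β V μ1 μ2]
    exact step_contract_aux hQm hQp hVmeas hV0 hβ hηs hγ'0 hK'0 hR hLy hDoe hc1 hc2 hc3
      μ2 μ1 hc


/-- Iteration of the one-step contraction plus remainder bound. -/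
lemma conclude {P : ℝ → ℝ → X → Measure X}
    (hPker : ∀ ⦃s u : ℝ⦄, s ≤ u → Measurable (P u s))
    (hPprob : ∀ ⦃s u : ℝ⦄, s ≤ u → ∀ x, IsProbabilityMeasure (P u s x))
    (hCK : ∀ ⦃s r u : ℝ⦄, s ≤ r → r ≤ u → ∀ x, (P r s x).bind (P u r) = P u s x)
    {β : ℝ} {V : X → ℝ}
    {Δ' α C0 : ℝ} (hΔ' : 0 < Δ') (hα0 : 0 < α) (hα1 : α < 1) (hC0 : 0 < C0)
    (Hstep : ∀ t : ℝ, ∀ μ1 μ2 : Measure X, IsProbabilityMeasure μ1 →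
      IsProbabilityMeasure μ2 →
      rhoB β V (μ1.bind (P (t + Δ') t)) (μ2.bind (P (t + Δ') t))
        ≤ ENNReal.ofReal α * rhoB β V μ1 μ2)
    (Hrem : ∀ ⦃s u : ℝ⦄, s ≤ u → u - s < Δ' → ∀ μ1 μ2 : Measure X,
      IsProbabilityMeasure μ1 → IsProbabilityMeasure μ2 →
      rhoB β V (μ1.bind (P u s)) (μ2.bind (P u s)) ≤ ENNReal.ofReal C0 * rhoB β V μ1 μ2) :
    ∀ μ1 μ2 : Measure X, IsProbabilityMeasure μ1 → IsProbabilityMeasure μ2 →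
      ∀ ⦃s u : ℝ⦄, s ≤ u →
      rhoB β V (μ1.bind (P u s)) (μ2.bind (P u s))
        ≤ ENNReal.ofReal ((C0 / α) * Real.exp (-(-Real.log α / Δ') * (u - s)))
          * rhoB β V μ1 μ2 := by
  have main : ∀ n : ℕ, ∀ s u : ℝ, s ≤ u → (n : ℝ) * Δ' ≤ u - s → u - s < ((n : ℝ) + 1) * Δ' →
      ∀ μ1 μ2 : Measure X, IsProbabilityMeasure μ1 → IsProbabilityMeasure μ2 →
      rhoB β V (μ1.bind (P u s)) (μ2.bind (P u s))
        ≤ ENNReal.ofReal (C0 * α ^ n) * rhoB β V μ1 μ2 := by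
    intro n
    induction n with
    | zero =>
      intro s u hsu _ h1 μ1 μ2 hμ1 hμ2
      have h1' : u - s < Δ' := by push_cast at h1; linarith
      simpa using Hrem hsu h1' μ1 μ2 hμ1 hμ2
    | succ n ih =>
      intro s u hsu hlow hhigh μ1 μ2 hμ1 hμ2
      push_cast at hlow hhigh
      have hnn : (0:ℝ) ≤ (n : ℝ) := Nat.cast_nonneg n
      have hsd : s ≤ s + Δ' := by linarith
      have hdu : s + Δ' ≤ u := by nlinarith
      have hcompose : ∀ μ : Measure X,
          μ.bind (P u s) = (μ.bind (P (s + Δ') s)).bind (P u (s + Δ')) := by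
        intro μ
        have e1 : μ.bind (P u s)
            = μ.bind (fun x => (P (s + Δ') s x).bind (P u (s + Δ'))) := by
          congr 1
          funext x
          exact (hCK hsd hdu x).symm
        rw [e1, Measure.bind_bind (hPker hsd).aemeasurable (hPker hdu).aemeasurable]
      haveI := hμ1; haveI := hμ2
      have hν1 : IsProbabilityMeasure (μ1.bind (P (s + Δ') s)) :=
        isProb_bind μ1 (hPker hsd) (hPprob hsd)
      have hν2 : IsProbabilityMeasure (μ2.bind (P (s + Δ') s)) :=
        isProb_bind μ2 (hPker hsd) (hPprob hsd)
      calc rhoB β V (μ1.bind (P u s)) (μ2.bind (P u s))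
          = rhoB β V ((μ1.bind (P (s + Δ') s)).bind (P u (s + Δ')))
            ((μ2.bind (P (s + Δ') s)).bind (P u (s + Δ'))) := by rw [hcompose, hcompose]
        _ ≤ ENNReal.ofReal (C0 * α ^ n)
            * rhoB β V (μ1.bind (P (s + Δ') s)) (μ2.bind (P (s + Δ') s)) := by
            refine ih (s + Δ') u hdu (by push_cast; linarith) (by push_cast; linarith)
              _ _ hν1 hν2
        _ ≤ ENNReal.ofReal (C0 * α ^ n) * (ENNReal.ofReal α * rhoB β V μ1 μ2) :=
            mul_le_mul_right (Hstep s μ1 μ2 hμ1 hμ2) _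
        _ = ENNReal.ofReal (C0 * α ^ (n + 1)) * rhoB β V μ1 μ2 := by
            rw [← mul_assoc, ← ENNReal.ofReal_mul (by positivity)]
            ring_nf
  intro μ1 μ2 hμ1 hμ2 s u hsu
  set n : ℕ := ⌊(u - s) / Δ'⌋₊ with hndef
  have hd0 : 0 ≤ (u - s) / Δ' := div_nonneg (by linarith) hΔ'.le
  have hn1 : (n : ℝ) * Δ' ≤ u - s := by
    have := Nat.floor_le hd0
    calc (n : ℝ) * Δ' ≤ (u - s) / Δ' * Δ' := by
          exact mul_le_mul_of_nonneg_right this hΔ'.le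
      _ = u - s := by field_simp
  have hn2 : u - s < ((n : ℝ) + 1) * Δ' := by
    have := Nat.lt_floor_add_one ((u - s) / Δ')
    calc u - s = (u - s) / Δ' * Δ' := by field_simp
      _ < ((n : ℝ) + 1) * Δ' := by
          exact mul_lt_mul_of_pos_right this hΔ'
  have hbound := main n s u hsu hn1 hn2 μ1 μ2 hμ1 hμ2
  refine le_trans hbound (mul_le_mul_left (ENNReal.ofReal_le_ofReal ?_) _)
  -- real bound : C0 * α ^ n ≤ (C0/α) * exp (log α / Δ' * (u - s))
  have hlog : Real.log α < 0 := Real.log_neg hα0 hα1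
  have hexp1 : α ^ n = Real.exp ((n : ℝ) * Real.log α) := by
    rw [← Real.log_pow, Real.exp_log (pow_pos hα0 n)]
  have hexp2 : (C0 / α) * Real.exp (-(-Real.log α / Δ') * (u - s))
      = C0 * Real.exp (-Real.log α + Real.log α * ((u - s) / Δ')) := by
    rw [Real.exp_add, Real.exp_neg, Real.exp_log hα0]
    field_simp
  rw [hexp1, hexp2]
  refine mul_le_mul_of_nonneg_left ?_ hC0.le
  refine Real.exp_le_exp.mpr ?_
  have hfr : (u - s) / Δ' ≤ (n : ℝ) + 1 := by
    rw [div_le_iff₀ hΔ']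
    linarith
  nlinarith [mul_le_mul_of_nonpos_left hfr hlog.le]


end Stmt6

open Stmt6

/-- geometric contraction under Assumptions 1 and 2
(Corollary on geometric ergodicity), with `β = η_Δ / (2 h(Δ))`. -/
theorem statement6 {X : Type*} [MeasurableSpace X]
    (P : ℝ → ℝ → X → Measure X)
    (hPprob : ∀ ⦃s u : ℝ⦄, s ≤ u → ∀ x, IsProbabilityMeasure (P u s x))
    (hPmeas : ∀ ⦃s u : ℝ⦄, s ≤ u → ∀ ⦃Γ : Set X⦄, MeasurableSet Γ →
      Measurable fun x => P u s x Γ)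
    (hCK : ∀ ⦃s r u : ℝ⦄, s ≤ r → r ≤ u → ∀ x, (P r s x).bind (P u r) = P u s x)
    (V : X → ℝ) (hV0 : ∀ x, 0 ≤ V x) (hVmeas : Measurable V)
    (γf Kf : ℝ → ℝ → ℝ)
    (hγ0 : ∀ ⦃s u : ℝ⦄, s ≤ u → 0 ≤ γf u s) (hK0 : ∀ ⦃s u : ℝ⦄, s ≤ u → 0 ≤ Kf u s)
    (hLyap : ∀ ⦃s u : ℝ⦄, s ≤ u → ∀ x,
      ∫⁻ y, ENNReal.ofReal (V y) ∂(P u s x) ≤ ENNReal.ofReal (γf u s * V x + Kf u s))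
    (R : ℝ) (hR : 0 < R)
    (η : ℝ → ℝ → ℝ)
    (hη0 : ∀ ⦃s u : ℝ⦄, s ≤ u → 0 ≤ η u s) (hη1 : ∀ ⦃s u : ℝ⦄, s ≤ u → η u s < 1)
    (ν : Measure X) (hν : IsProbabilityMeasure ν)
    (hDoeblin : ∀ ⦃s u : ℝ⦄, s ≤ u → ∀ x, V x ≤ R → ENNReal.ofReal (η u s) • ν ≤ P u s x)
    -- Assumption 2
    (h : ℝ → ℝ) (hhmono : MonotoneOn h (Set.Ici 0)) (hh0 : ∀ u, 0 ≤ u → 0 ≤ h u)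
    (hdom : ∀ ⦃s u : ℝ⦄, s ≤ u → max (γf u s) (Kf u s) ≤ h (u - s))
    (Δ γΔ ηΔ : ℝ) (hΔ : 0 < Δ) (hγΔpos : 0 < γΔ) (hηΔpos : 0 < ηΔ)
    (hγΔ : ∀ u : ℝ, γf (u + Δ) u ≤ γΔ) (hγΔ1 : γΔ < 1)
    (hRbig : 2 * h Δ / (1 - γΔ) < R)
    (hηΔ : ∀ u : ℝ, ηΔ ≤ η (u + Δ) u) :
    ∃ C > (0 : ℝ), ∃ lam > (0 : ℝ),
      ∀ μ1 μ2 : Measure X, IsProbabilityMeasure μ1 → IsProbabilityMeasure μ2 →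
        (∫⁻ x, ENNReal.ofReal (V x) ∂μ1 < ⊤) → (∫⁻ x, ENNReal.ofReal (V x) ∂μ2 < ⊤) →
        ∀ ⦃s u : ℝ⦄, s ≤ u →
          rhoB (ηΔ / (2 * h Δ)) V (μ1.bind (P u s)) (μ2.bind (P u s)) ≤
            ENNReal.ofReal (C * Real.exp (-lam * (u - s))) *
              rhoB (ηΔ / (2 * h Δ)) V μ1 μ2 := by
  have hPker : ∀ ⦃s u : ℝ⦄, s ≤ u → Measurable (P u s) := fun s u hsu =>
    Measure.measurable_of_measurable_coe _ (fun E hE => hPmeas hsu hE)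
  have hhΔ0 : 0 ≤ h Δ := hh0 Δ hΔ.le
  have hηΔ1 : ηΔ < 1 := lt_of_le_of_lt (hηΔ 0) (hη1 (by linarith : (0:ℝ) ≤ 0 + Δ))
  have h1γ : (0:ℝ) < 1 - γΔ := by linarith
  by_cases hpos : 0 < h Δ
  · -- main case: h Δ > 0, β > 0
    set β : ℝ := ηΔ / (2 * h Δ) with hβdef
    have hβpos : 0 < β := div_pos hηΔpos (by linarith)
    have hbh : β * h Δ = ηΔ / 2 := by
      rw [hβdef]; field_simp
    set α3 : ℝ := (2 + 2 * (β * h Δ) + β * γΔ * R) / (2 + β * R) with hα3def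
    set α : ℝ := max (max (1 - ηΔ / 2) γΔ) α3 with hαdef
    have hden : (0:ℝ) < 2 + β * R := by nlinarith
    have hRb : 2 * h Δ < R * (1 - γΔ) := by
      rw [div_lt_iff₀ h1γ] at hRbig; linarith
    have hα3lt : α3 < 1 := by
      rw [hα3def, div_lt_one hden]
      nlinarith
    have hαlt : α < 1 := max_lt (max_lt (by linarith) hγΔ1) hα3lt
    have hαpos : 0 < α :=
      lt_of_lt_of_le hγΔpos ((le_max_right _ _).trans (le_max_left _ _))
    set C0 : ℝ := 1 + β * h Δ + h Δ with hC0def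
    have hC0pos : 0 < C0 := by positivity
    have hα3eq : 2 + 2 * (β * h Δ) + β * γΔ * R = α3 * (2 + β * R) :=
      (div_mul_cancel₀ _ hden.ne').symm
    refine ⟨C0 / α, by positivity, -Real.log α / Δ,
      div_pos (neg_pos.mpr (Real.log_neg hαpos hαlt)) hΔ, ?_⟩
    intro μ1 μ2 hμ1 hμ2 _ _ s u hsu
    refine conclude hPker hPprob hCK hΔ hαpos hαlt hC0pos ?_ ?_ μ1 μ2 hμ1 hμ2 hsu
    · -- Hstep
      intro t ρ1 ρ2 hρ1 hρ2
      haveI := hρ1; haveI := hρ2; haveI := hν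
      have ht : t ≤ t + Δ := by linarith
      have hKb : Kf (t + Δ) t ≤ h Δ := by
        have := hdom ht
        rw [add_sub_cancel_left] at this
        exact le_trans (le_max_right _ _) this
      have hγb : γf (t + Δ) t ≤ γΔ := hγΔ t
      have hβK : β * Kf (t + Δ) t ≤ ηΔ / 2 := by
        rw [← hbh]
        exact mul_le_mul_of_nonneg_left hKb hβpos.le
      refine step_contract (ν := ν) (hPker ht) (hPprob ht) hVmeas hV0 hβpos.le hηΔpos.le
        (hγ0 ht) (hK0 ht) hR.le (hLyap ht) ?_ ?_ ?_ ?_ ρ1 ρ2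
      · intro x hx
        exact le_trans (smul_meas_mono_left (ENNReal.ofReal_le_ofReal (hηΔ t)) ν)
          (hDoeblin ht x hx)
      · have : 1 - ηΔ / 2 ≤ α := (le_max_left _ _).trans (le_max_left _ _)
        linarith
      · exact le_trans hγb ((le_max_right _ _).trans (le_max_left _ _))
      · have hm1 : β * Kf (t + Δ) t ≤ β * h Δ := mul_le_mul_of_nonneg_left hKb hβpos.le
        have hm2 : β * γf (t + Δ) t * R ≤ β * γΔ * R :=
          mul_le_mul_of_nonneg_right (mul_le_mul_of_nonneg_left hγb hβpos.le) hR.le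
        have hα3le : α3 ≤ α := le_max_right _ _
        calc 2 + 2 * (β * Kf (t + Δ) t) + β * γf (t + Δ) t * R
            ≤ 2 + 2 * (β * h Δ) + β * γΔ * R := by linarith
          _ = α3 * (2 + β * R) := hα3eq
          _ ≤ α * (2 + β * R) := mul_le_mul_of_nonneg_right hα3le hden.le
    · -- Hrem
      intro s' u' hsu' hlt ρ1 ρ2 hρ1 hρ2
      haveI := hρ1; haveI := hρ2
      have hmem1 : u' - s' ∈ Set.Ici (0:ℝ) := by simp; linarith
      have hmem2 : Δ ∈ Set.Ici (0:ℝ) := by simp [hΔ.le]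
      have hhb : h (u' - s') ≤ h Δ := hhmono hmem1 hmem2 (by linarith)
      have hKb : Kf u' s' ≤ h Δ := le_trans (le_trans (le_max_right _ _) (hdom hsu')) hhb
      have hγb : γf u' s' ≤ h Δ := le_trans (le_trans (le_max_left _ _) (hdom hsu')) hhb
      refine step_expand (hPker hsu') (hPprob hsu') hVmeas hV0 hβpos.le
        (hγ0 hsu') (hK0 hsu') (hLyap hsu') ?_ ?_ ρ1 ρ2
      · have : β * Kf u' s' ≤ β * h Δ := mul_le_mul_of_nonneg_left hKb hβpos.le
        rw [hC0def]; linarith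
      · rw [← ENNReal.ofReal_mul hC0pos.le]
        refine ENNReal.ofReal_le_ofReal ?_
        have hC0hΔ : h Δ ≤ C0 := by rw [hC0def]; nlinarith
        nlinarith [hγ0 hsu']
  · -- degenerate case: h Δ = 0, so β = 0
    have hz : h Δ = 0 := le_antisymm (not_lt.mp hpos) hhΔ0
    have hβz : ηΔ / (2 * h Δ) = 0 := by rw [hz]; norm_num
    rw [hβz]
    set α : ℝ := 1 - ηΔ / 2 with hαdef
    have hαpos : 0 < α := by rw [hαdef]; linarith
    have hαlt : α < 1 := by rw [hαdef]; linarith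
    have h2Δ : (0:ℝ) < 2 * Δ := by linarith
    refine ⟨1 / α, by positivity, -Real.log α / (2 * Δ),
      div_pos (neg_pos.mpr (Real.log_neg hαpos hαlt)) h2Δ, ?_⟩
    intro μ1 μ2 hμ1 hμ2 _ _ s u hsu
    refine conclude hPker hPprob hCK h2Δ hαpos hαlt one_pos ?_ ?_ μ1 μ2 hμ1 hμ2 hsu
    · -- Hstep : global Doeblin over a 2Δ step
      intro t ρ1 ρ2 hρ1 hρ2
      haveI := hρ1; haveI := hρ2; haveI := hν
      have ht1 : t ≤ t + Δ := by linarith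
      have ht2 : t + Δ ≤ t + 2 * Δ := by linarith
      have ht3 : t ≤ t + 2 * Δ := by linarith
      have hglob : ∀ x, ENNReal.ofReal ηΔ • ν ≤ P (t + 2 * Δ) t x := by
        intro x
        have hQx : (P (t + Δ) t x).bind (P (t + 2 * Δ) (t + Δ)) = P (t + 2 * Δ) t x :=
          hCK ht1 ht2 x
        rw [Measure.le_iff]
        intro E hE
        rw [← hQx, Measure.bind_apply hE (hPker ht2).aemeasurable]
        have hγK : γf (t + Δ) t = 0 ∧ Kf (t + Δ) t = 0 := by
          have hm := hdom ht1
          rw [add_sub_cancel_left, hz] at hm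
          constructor
          · exact le_antisymm (le_trans (le_max_left _ _) hm) (hγ0 ht1)
          · exact le_antisymm (le_trans (le_max_right _ _) hm) (hK0 ht1)
        have hae : ∀ᵐ y ∂(P (t + Δ) t x), V y ≤ R := by
          have hint : ∫⁻ y, ENNReal.ofReal (V y) ∂(P (t + Δ) t x) = 0 := by
            have hb := hLyap ht1 x
            rw [hγK.1, hγK.2] at hb
            simpa using hb
          have h0 := (lintegral_eq_zero_iff hVmeas.ennreal_ofReal).mp hint
          filter_upwards [h0] with y hy
          have : ENNReal.ofReal (V y) = 0 := hy
          rw [ENNReal.ofReal_eq_zero] at this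
          linarith
        have hconst : (ENNReal.ofReal ηΔ • ν) E
            = ∫⁻ _, (ENNReal.ofReal ηΔ • ν) E ∂(P (t + Δ) t x) := by
          rw [lintegral_const]
          haveI := hPprob ht1 x
          rw [measure_univ, mul_one]
        rw [hconst]
        refine lintegral_mono_ae ?_
        filter_upwards [hae] with y hy
        have hηle : ηΔ ≤ η (t + 2 * Δ) (t + Δ) := by
          have := hηΔ (t + Δ)
          have e : t + Δ + Δ = t + 2 * Δ := by ring
          rwa [e] at this
        have hd2 : ENNReal.ofReal ηΔ • ν ≤ P (t + 2 * Δ) (t + Δ) y :=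
          le_trans (smul_meas_mono_left (ENNReal.ofReal_le_ofReal hηle) ν)
            (hDoeblin ht2 y hy)
        exact hd2 E
      exact step_contract_global (hPker ht3) (hPprob ht3) hVmeas hV0 hηΔpos.le hαpos.le
        (by rw [hαdef]; linarith) hglob ρ1 ρ2
    · -- Hrem with C0 = 1 and β = 0
      intro s' u' hsu' hlt ρ1 ρ2 hρ1 hρ2
      haveI := hρ1; haveI := hρ2
      refine step_expand (hPker hsu') (hPprob hsu') hVmeas hV0 le_rfl
        (hγ0 hsu') (hK0 hsu') (hLyap hsu') ?_ ?_ ρ1 ρ2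
      · rw [zero_mul]; norm_num
      · rw [zero_mul]; simp
end

section
/- Suppose Assumption 1(i) holds with functions γ(t,s), K(t,s), and Assumption 2 holds with nondecreasing h and constants Δ > 0, γ_Δ < 1 (so γ(t,s), K(t,s) ≤ h(|t−s|) for all t ≥ s and γ(t+Δ, t) ≤ γ_Δ for all t). Then for every integer m ≥ 0, every s ∈ ℝ and every x ∈ X: P(s+mΔ, s)V(x) ≤ V(x) + h(Δ)/(1−γ_Δ); and consequently for all t ≥ s and x ∈ X: P(t,s)V(x) ≤ h(Δ)·V(x) + h(Δ)²/(1−γ_Δ) + h(Δ). -/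
open MeasureTheory ENNReal Filter

/-- uniform-in-time Lyapunov bounds obtained by iterating the one-step
Lyapunov estimate over intervals of length `Δ`. Here `P(t,s)V(x) = ∫ V(y) P(t,s,x,dy)`. -/
theorem statement8 {X : Type*} [MeasurableSpace X]
    (P : ℝ → ℝ → X → Measure X)
    (hPprob : ∀ ⦃s u : ℝ⦄, s ≤ u → ∀ x, IsProbabilityMeasure (P u s x))
    (hPmeas : ∀ ⦃s u : ℝ⦄, s ≤ u → ∀ ⦃Γ : Set X⦄, MeasurableSet Γ →
      Measurable fun x => P u s x Γ)
    (hCK : ∀ ⦃s r u : ℝ⦄, s ≤ r → r ≤ u → ∀ x, (P r s x).bind (P u r) = P u s x)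
    (hId : ∀ (s : ℝ) (x : X), P s s x = Measure.dirac x)
    (V : X → ℝ) (hV0 : ∀ x, 0 ≤ V x) (hVmeas : Measurable V)
    -- Assumption 1 (i)
    (γf Kf : ℝ → ℝ → ℝ)
    (hγ0 : ∀ ⦃s u : ℝ⦄, s ≤ u → 0 ≤ γf u s) (hK0 : ∀ ⦃s u : ℝ⦄, s ≤ u → 0 ≤ Kf u s)
    (hLyap : ∀ ⦃s u : ℝ⦄, s ≤ u → ∀ x,
      ∫⁻ y, ENNReal.ofReal (V y) ∂(P u s x) ≤ ENNReal.ofReal (γf u s * V x + Kf u s))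
    -- Assumption 2
    (h : ℝ → ℝ) (hhmono : MonotoneOn h (Set.Ici 0)) (hh0 : ∀ u, 0 ≤ u → 0 ≤ h u)
    (hdom : ∀ ⦃s u : ℝ⦄, s ≤ u → max (γf u s) (Kf u s) ≤ h (u - s))
    (Δ γΔ : ℝ) (hΔ : 0 < Δ) (hγΔ1 : γΔ < 1)
    (hγΔ : ∀ u : ℝ, γf (u + Δ) u ≤ γΔ) :
    (∀ (m : ℕ) (s : ℝ) (x : X),
      ∫⁻ y, ENNReal.ofReal (V y) ∂(P (s + m * Δ) s x) ≤
        ENNReal.ofReal (V x + h Δ / (1 - γΔ))) ∧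
    (∀ ⦃s u : ℝ⦄, s ≤ u → ∀ x : X,
      ∫⁻ y, ENNReal.ofReal (V y) ∂(P u s x) ≤
        ENNReal.ofReal (h Δ * V x + (h Δ) ^ 2 / (1 - γΔ) + h Δ)) := by
  have hγΔ0 : 0 ≤ γΔ := le_trans (hγ0 (by linarith : (0:ℝ) ≤ 0 + Δ)) (hγΔ 0)
  have hhΔ : 0 ≤ h Δ := hh0 Δ hΔ.le
  have hden : 0 < 1 - γΔ := by linarith
  have hVm : Measurable fun y => ENNReal.ofReal (V y) := hVmeas.ennreal_ofReal
  have hsum : ∀ m : ℕ, (∑ i ∈ Finset.range m, γΔ ^ i) ≤ 1 / (1 - γΔ) := by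
    intro m
    rw [le_div_iff₀ hden]
    nlinarith [geom_sum_mul γΔ m, pow_nonneg hγΔ0 m]
  have hsum0 : ∀ m : ℕ, 0 ≤ ∑ i ∈ Finset.range m, γΔ ^ i := fun m =>
    Finset.sum_nonneg fun i _ => pow_nonneg hγΔ0 i
  -- main inductive estimate
  have main : ∀ (m : ℕ) (s : ℝ) (x : X),
      ∫⁻ y, ENNReal.ofReal (V y) ∂(P (s + m * Δ) s x) ≤
        ENNReal.ofReal (γΔ ^ m * V x + h Δ * ∑ i ∈ Finset.range m, γΔ ^ i) := by
    intro m
    induction m with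
    | zero =>
      intro s x
      simp only [Nat.cast_zero, zero_mul, add_zero, pow_zero, one_mul,
        Finset.range_zero, Finset.sum_empty, mul_zero]
      rw [hId s x, lintegral_dirac' x hVm]
    | succ m ih =>
      intro s x
      set r : ℝ := s + m * Δ with hr
      have hsr : s ≤ r := by
        have : (0:ℝ) ≤ m * Δ := mul_nonneg (Nat.cast_nonneg m) hΔ.le
        linarith
      have hu : s + (m + 1 : ℕ) * Δ = r + Δ := by push_cast; ring
      have hru : r ≤ r + Δ := by linarith
      rw [hu, ← hCK hsr hru x,
        Measure.lintegral_bind (Measure.measurable_of_measurable_coe _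
          (fun Γ hΓ => hPmeas hru hΓ)).aemeasurable hVm.aemeasurable]
      have hK : Kf (r + Δ) r ≤ h Δ := by
        have := (le_max_right (γf (r + Δ) r) (Kf (r + Δ) r)).trans (hdom hru)
        simpa using this
      have inner : ∀ y : X, ∫⁻ z, ENNReal.ofReal (V z) ∂(P (r + Δ) r y) ≤
          ENNReal.ofReal γΔ * ENNReal.ofReal (V y) + ENNReal.ofReal (h Δ) := by
        intro y
        refine (hLyap hru y).trans ?_
        rw [← ENNReal.ofReal_mul hγΔ0, ← ENNReal.ofReal_add
          (mul_nonneg hγΔ0 (hV0 y)) hhΔ]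
        exact ENNReal.ofReal_le_ofReal
          (add_le_add (mul_le_mul_of_nonneg_right (hγΔ r) (hV0 y)) hK)
      calc ∫⁻ y, (∫⁻ z, ENNReal.ofReal (V z) ∂(P (r + Δ) r y)) ∂(P r s x)
          ≤ ∫⁻ y, (ENNReal.ofReal γΔ * ENNReal.ofReal (V y) + ENNReal.ofReal (h Δ))
              ∂(P r s x) := lintegral_mono inner
        _ = ENNReal.ofReal γΔ * (∫⁻ y, ENNReal.ofReal (V y) ∂(P r s x))
              + ENNReal.ofReal (h Δ) := by
            haveI := hPprob hsr x
            rw [lintegral_add_right _ measurable_const, lintegral_const,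
              lintegral_const_mul _ hVm, measure_univ, mul_one]
        _ ≤ ENNReal.ofReal γΔ *
              ENNReal.ofReal (γΔ ^ m * V x + h Δ * ∑ i ∈ Finset.range m, γΔ ^ i)
              + ENNReal.ofReal (h Δ) := by
            gcongr
            exact ih s x
        _ ≤ ENNReal.ofReal
              (γΔ ^ (m + 1) * V x + h Δ * ∑ i ∈ Finset.range (m + 1), γΔ ^ i) := by
            rw [← ENNReal.ofReal_mul hγΔ0, ← ENNReal.ofReal_add
              (mul_nonneg hγΔ0 (add_nonneg (mul_nonneg (pow_nonneg hγΔ0 m) (hV0 x))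
                (mul_nonneg hhΔ (hsum0 m)))) hhΔ]
            apply ENNReal.ofReal_le_ofReal
            apply le_of_eq
            rw [geom_sum_succ]
            ring
  -- first claim
  have first : ∀ (m : ℕ) (s : ℝ) (x : X),
      ∫⁻ y, ENNReal.ofReal (V y) ∂(P (s + m * Δ) s x) ≤
        ENNReal.ofReal (V x + h Δ / (1 - γΔ)) := by
    intro m s x
    refine (main m s x).trans (ENNReal.ofReal_le_ofReal ?_)
    have h1 : γΔ ^ m * V x ≤ V x := by
      have := pow_le_one₀ hγΔ0 hγΔ1.le (n := m)
      nlinarith [hV0 x]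
    have h2 : h Δ * ∑ i ∈ Finset.range m, γΔ ^ i ≤ h Δ / (1 - γΔ) := by
      rw [div_eq_mul_one_div]
      exact mul_le_mul_of_nonneg_left (hsum m) hhΔ
    linarith
  refine ⟨first, ?_⟩
  intro s u hsu x
  set m : ℕ := ⌊(u - s) / Δ⌋₊ with hm
  have hd0 : 0 ≤ (u - s) / Δ := div_nonneg (by linarith) hΔ.le
  have hmle : (m : ℝ) * Δ ≤ u - s := by
    have := Nat.floor_le hd0
    calc (m : ℝ) * Δ ≤ ((u - s) / Δ) * Δ := by
          exact mul_le_mul_of_nonneg_right this hΔ.le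
      _ = u - s := by field_simp
  have hmlt : u - s < (m + 1 : ℝ) * Δ := by
    have := Nat.lt_floor_add_one ((u - s) / Δ)
    calc u - s = ((u - s) / Δ) * Δ := by field_simp
      _ < (m + 1 : ℝ) * Δ := by
          exact mul_lt_mul_of_pos_right this hΔ
  set r : ℝ := s + m * Δ with hr
  have hsr : s ≤ r := by
    have : (0:ℝ) ≤ m * Δ := mul_nonneg (Nat.cast_nonneg m) hΔ.le
    linarith
  have hru : r ≤ u := by simp only [hr]; linarith
  have hurΔ : u - r ≤ Δ := by simp only [hr]; linarith
  have hur0 : 0 ≤ u - r := by linarith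
  have hhur : h (u - r) ≤ h Δ := hhmono hur0 hΔ.le hurΔ
  have hγ' : γf u r ≤ h Δ :=
    ((le_max_left _ _).trans (hdom hru)).trans hhur
  have hK' : Kf u r ≤ h Δ :=
    ((le_max_right _ _).trans (hdom hru)).trans hhur
  rw [← hCK hsr hru x,
    Measure.lintegral_bind (Measure.measurable_of_measurable_coe _
      (fun Γ hΓ => hPmeas hru hΓ)).aemeasurable hVm.aemeasurable]
  have inner : ∀ y : X, ∫⁻ z, ENNReal.ofReal (V z) ∂(P u r y) ≤
      ENNReal.ofReal (h Δ) * ENNReal.ofReal (V y) + ENNReal.ofReal (h Δ) := by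
    intro y
    refine (hLyap hru y).trans ?_
    rw [← ENNReal.ofReal_mul hhΔ, ← ENNReal.ofReal_add
      (mul_nonneg hhΔ (hV0 y)) hhΔ]
    exact ENNReal.ofReal_le_ofReal
      (add_le_add (mul_le_mul_of_nonneg_right hγ' (hV0 y)) hK')
  calc ∫⁻ y, (∫⁻ z, ENNReal.ofReal (V z) ∂(P u r y)) ∂(P r s x)
      ≤ ∫⁻ y, (ENNReal.ofReal (h Δ) * ENNReal.ofReal (V y) + ENNReal.ofReal (h Δ))
          ∂(P r s x) := lintegral_mono inner
    _ = ENNReal.ofReal (h Δ) * (∫⁻ y, ENNReal.ofReal (V y) ∂(P r s x))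
          + ENNReal.ofReal (h Δ) := by
        haveI := hPprob hsr x
        rw [lintegral_add_right _ measurable_const, lintegral_const,
          lintegral_const_mul _ hVm, measure_univ, mul_one]
    _ ≤ ENNReal.ofReal (h Δ) * ENNReal.ofReal (V x + h Δ / (1 - γΔ))
          + ENNReal.ofReal (h Δ) := by
        gcongr
        exact first m s x
    _ ≤ ENNReal.ofReal (h Δ * V x + (h Δ) ^ 2 / (1 - γΔ) + h Δ) := by
        rw [← ENNReal.ofReal_mul hhΔ, ← ENNReal.ofReal_add
          (mul_nonneg hhΔ (add_nonneg (hV0 x) (div_nonneg hhΔ hden.le))) hhΔ]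
        apply ENNReal.ofReal_le_ofReal
        have : h Δ * (V x + h Δ / (1 - γΔ)) = h Δ * V x + (h Δ) ^ 2 / (1 - γΔ) := by
          field_simp
        linarith [this.le]
end

section
/- Let X_n, X be ℝ^d-valued random variables (on a probability space) whose laws are absolutely continuous with respect to Lebesgue measure, with densities q_n and q respectively. If X_n → X almost surely, or X_n → X in L^p for some p ≥ 1, then q(x) ≥ liminf_{n→∞} q_n(x) for Lebesgue-almost every x ∈ ℝ^d. -/
open MeasureTheory ENNReal Filter Metric Set Topology

/-- if random variables `X_n` with densities `q_n` converge to `X` with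
density `q` almost surely or in `L^p` for some `p ≥ 1`, then
`q(x) ≥ liminf_n q_n(x)` for Lebesgue-a.e. `x`. -/
theorem statement10 {d : ℕ} {Ω : Type*} [MeasureSpace Ω]
    [IsProbabilityMeasure (volume : Measure Ω)]
    (Xn : ℕ → Ω → EuclideanSpace ℝ (Fin d)) (X : Ω → EuclideanSpace ℝ (Fin d))
    (hXn : ∀ n, Measurable (Xn n)) (hX : Measurable X)
    (qn : ℕ → EuclideanSpace ℝ (Fin d) → ℝ≥0∞) (q : EuclideanSpace ℝ (Fin d) → ℝ≥0∞)
    (hqn : ∀ n, Measurable (qn n)) (hq : Measurable q)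
    (hlawn : ∀ n, Measure.map (Xn n) (volume : Measure Ω) = volume.withDensity (qn n))
    (hlaw : Measure.map X (volume : Measure Ω) = volume.withDensity q)
    (hconv : (∀ᵐ ω ∂(volume : Measure Ω),
        Filter.Tendsto (fun n => Xn n ω) Filter.atTop (nhds (X ω))) ∨
      (∃ p : ℝ, 1 ≤ p ∧ Filter.Tendsto
        (fun n => ∫⁻ ω, (‖Xn n ω - X ω‖₊ : ℝ≥0∞) ^ p ∂(volume : Measure Ω))
        Filter.atTop (nhds 0))) :
    ∀ᵐ x ∂(volume : Measure (EuclideanSpace ℝ (Fin d))),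
      Filter.liminf (fun n => qn n x) Filter.atTop ≤ q x := by
  -- Step 1: convergence in measure
  have hTIM : TendstoInMeasure (volume : Measure Ω) Xn atTop X := by
    rcases hconv with h | ⟨p, hp, hI⟩
    · exact tendstoInMeasure_of_tendsto_ae (fun n => (hXn n).aestronglyMeasurable) h
    · have hp0 : (0:ℝ) < p := lt_of_lt_of_le one_pos hp
      refine tendstoInMeasure_of_tendsto_eLpNorm (p := ENNReal.ofReal p)
        (by simp [ENNReal.ofReal_eq_zero]; linarith)
        (fun n => (hXn n).aestronglyMeasurable) hX.aestronglyMeasurable ?_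
      have heq : ∀ n, eLpNorm (Xn n - X) (ENNReal.ofReal p) (volume : Measure Ω)
          = (∫⁻ ω, (‖Xn n ω - X ω‖₊ : ℝ≥0∞) ^ p ∂(volume : Measure Ω)) ^ (1/p) := by
        intro n
        rw [eLpNorm_eq_lintegral_rpow_enorm_toReal (by simp [ENNReal.ofReal_eq_zero]; linarith)
          (by simp), ENNReal.toReal_ofReal hp0.le]
        rfl
      have h2 : Tendsto (fun n => (∫⁻ ω, (‖Xn n ω - X ω‖₊ : ℝ≥0∞) ^ p
          ∂(volume : Measure Ω)) ^ (1/p)) atTop (𝓝 ((0:ℝ≥0∞) ^ (1/p))) :=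
        (ENNReal.continuous_rpow_const.tendsto 0).comp hI
      rw [ENNReal.zero_rpow_of_pos (by positivity)] at h2
      simpa [heq] using h2
  have hmapP : IsProbabilityMeasure (Measure.map X (volume : Measure Ω)) :=
    Measure.isProbabilityMeasure_map hX.aemeasurable
  -- Step 2: key closed-set bound
  have key : ∀ K : Set (EuclideanSpace ℝ (Fin d)), IsClosed K → MeasurableSet K →
      limsup (fun n => ∫⁻ x in K, qn n x) atTop ≤ ∫⁻ x in K, q x := by
    intro K hKc hKm
    have hμn : ∀ n, ∫⁻ x in K, qn n x = volume (Xn n ⁻¹' K) := by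
      intro n
      rw [← withDensity_apply _ hKm, ← hlawn n, Measure.map_apply (hXn n) hKm]
    have hth : ∀ δ : ℝ, 0 < δ → limsup (fun n => volume (Xn n ⁻¹' K)) atTop
        ≤ Measure.map X (volume : Measure Ω) (thickening δ K) := by
      intro δ hδ
      rw [Measure.map_apply hX isOpen_thickening.measurableSet]
      have hsub : ∀ n, Xn n ⁻¹' K ⊆ X ⁻¹' thickening δ K
          ∪ {ω | δ ≤ dist (Xn n ω) (X ω)} := by
        intro n ω hω
        by_cases h : δ ≤ dist (Xn n ω) (X ω)
        · exact Or.inr h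
        · left
          rw [mem_preimage, Metric.mem_thickening_iff]
          exact ⟨Xn n ω, hω, by rw [dist_comm]; exact not_le.mp h⟩
      have hb : ∀ n, volume (Xn n ⁻¹' K) ≤ volume (X ⁻¹' thickening δ K)
          + volume {ω | δ ≤ dist (Xn n ω) (X ω)} :=
        fun n => (measure_mono (hsub n)).trans (measure_union_le _ _)
      have hlim : Tendsto (fun n => volume (X ⁻¹' thickening δ K)
          + volume {ω | δ ≤ dist (Xn n ω) (X ω)}) atTop
          (𝓝 (volume (X ⁻¹' thickening δ K) + 0)) :=
        tendsto_const_nhds.add (tendstoInMeasure_iff_dist.mp hTIM δ hδ)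
      calc limsup (fun n => volume (Xn n ⁻¹' K)) atTop
          ≤ limsup (fun n => volume (X ⁻¹' thickening δ K)
            + volume {ω | δ ≤ dist (Xn n ω) (X ω)}) atTop :=
            limsup_le_limsup (Eventually.of_forall hb)
        _ = volume (X ⁻¹' thickening δ K) + 0 := hlim.limsup_eq
        _ = volume (X ⁻¹' thickening δ K) := add_zero _
    have hthick : Tendsto (fun δ => Measure.map X (volume : Measure Ω) (thickening δ K))
        (nhdsWithin 0 (Ioi 0)) (𝓝 (Measure.map X (volume : Measure Ω) K)) :=
      tendsto_measure_thickening_of_isClosed ⟨1, one_pos, measure_ne_top _ _⟩ hKc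
    have hlimsup : limsup (fun n => volume (Xn n ⁻¹' K)) atTop
        ≤ Measure.map X (volume : Measure Ω) K :=
      ge_of_tendsto hthick (eventually_nhdsWithin_of_forall fun δ hδ => hth δ hδ)
    calc limsup (fun n => ∫⁻ x in K, qn n x) atTop
        = limsup (fun n => volume (Xn n ⁻¹' K)) atTop := by simp_rw [hμn]
      _ ≤ Measure.map X (volume : Measure Ω) K := hlimsup
      _ = ∫⁻ x in K, q x := by rw [hlaw, withDensity_apply _ hKm]
  -- Step 3: conclude a.e.
  have hf : Measurable (fun x => liminf (fun n => qn n x) atTop) := Measurable.liminf hqn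
  set f : EuclideanSpace ℝ (Fin d) → ℝ≥0∞ := fun x => liminf (fun n => qn n x) atTop with hfdef
  rw [ae_iff]
  have hcover : {x | ¬ f x ≤ q x} ⊆ ⋃ (r : ℚ) (s : ℚ)
      (_ : (Real.toNNReal r : ℝ≥0∞) < (Real.toNNReal s : ℝ≥0∞)) (R : ℕ),
      ({x | q x < (Real.toNNReal r : ℝ≥0∞) ∧ (Real.toNNReal s : ℝ≥0∞) < f x}
        ∩ closedBall 0 R) := by
    intro x hx
    have hqf : q x < f x := not_le.mp hx
    obtain ⟨r, -, hr1, hr2⟩ := ENNReal.lt_iff_exists_rat_btwn.mp hqf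
    obtain ⟨s, -, hs1, hs2⟩ := ENNReal.lt_iff_exists_rat_btwn.mp hr2
    refine mem_iUnion.mpr ⟨r, mem_iUnion.mpr ⟨s, mem_iUnion.mpr ⟨hs1,
      mem_iUnion.mpr ⟨⌈‖x‖⌉₊, ⟨⟨hr1, hs2⟩, ?_⟩⟩⟩⟩⟩
    rw [mem_closedBall_zero_iff]
    exact (Nat.le_ceil _).trans (by exact_mod_cast le_refl _)
  refine measure_mono_null hcover (measure_iUnion_null fun r => measure_iUnion_null fun s =>
    measure_iUnion_null fun hrs => measure_iUnion_null fun R => ?_)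
  set B := {x | q x < (Real.toNNReal r : ℝ≥0∞) ∧ (Real.toNNReal s : ℝ≥0∞) < f x}
    ∩ closedBall (0 : EuclideanSpace ℝ (Fin d)) R with hBdef
  have hBm : MeasurableSet B :=
    ((measurableSet_lt hq measurable_const).inter
      (measurableSet_lt measurable_const hf)).inter measurableSet_closedBall
  have hBfin : volume B ≠ ∞ :=
    ((measure_mono inter_subset_right).trans_lt
      (isCompact_closedBall _ _).measure_lt_top).ne
  by_contra hpos
  obtain ⟨K, hKB, hKc, hKlt⟩ := hBm.exists_isCompact_lt_add hBfin (ε := volume B) hpos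
  have hK0 : volume K ≠ 0 := by
    intro h0
    rw [h0, zero_add] at hKlt
    exact lt_irrefl _ hKlt
  have hKm : MeasurableSet K := hKc.measurableSet
  have hKfin : volume K ≠ ∞ := hKc.measure_lt_top.ne
  have chain1 : (Real.toNNReal s : ℝ≥0∞) * volume K ≤ ∫⁻ x in K, f x := by
    rw [← setLIntegral_const K _]
    exact setLIntegral_mono hf fun x hx => ((hKB hx).1.2).le
  have chain2 : ∫⁻ x in K, f x ≤ liminf (fun n => ∫⁻ x in K, qn n x) atTop :=
    lintegral_liminf_le fun n => hqn n
  have chain3 : liminf (fun n => ∫⁻ x in K, qn n x) atTop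
      ≤ limsup (fun n => ∫⁻ x in K, qn n x) atTop := liminf_le_limsup
  have chain4 : limsup (fun n => ∫⁻ x in K, qn n x) atTop ≤ ∫⁻ x in K, q x :=
    key K hKc.isClosed hKm
  have chain5 : ∫⁻ x in K, q x ≤ (Real.toNNReal r : ℝ≥0∞) * volume K := by
    rw [← setLIntegral_const K _]
    exact setLIntegral_mono measurable_const fun x hx => ((hKB hx).1.1).le
  have hfinal : (Real.toNNReal s : ℝ≥0∞) * volume K
      ≤ (Real.toNNReal r : ℝ≥0∞) * volume K :=
    chain1.trans (chain2.trans (chain3.trans (chain4.trans chain5)))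
  rw [ENNReal.mul_le_mul_iff_left hK0 hKfin] at hfinal
  exact absurd hfinal (not_le.mpr hrs)
end

section
/- Let τ1, τ2 > 0 be such that the reciprocals of τ1 and τ2 are rationally linearly independent (equivalently τ1/τ2 is irrational). Let b̃ : ℝ × ℝ × ℝ^d → ℝ^d, α̃ : ℝ × ℝ → ℝ и Λ̃ : ℝ × ℝ → [0,∞) be continuous and periodic with period τ1 in the first variable and period τ2 in the second variable; set b(t,x) = b̃(t,t,x), α_t = α̃(t,t), Λ_t = Λ̃(t,t). Suppose there are Γ2 > 0 and κ ≥ 1 with |b(t,x)| ≤ Γ2(1 + |x|^κ) and ⟨x, b(t,x)⟩ ≤ α_t|x|² + Λ_t for all t ∈ ℝ, x ∈ ℝ^d; suppose b(t,·) is locally Lipschitz uniformly in t, i.e. for every N there is L_N with |b(t,x) − b(t,y)| ≤ L_N|x−y| whenever |x|, |y| ≤ N; and suppose there is a nondecreasing g : [0,∞) → [0,∞) with ∫_s^t (α_r⁺ + Λ_r) dr ≤ g(t−s) for all s ≤ t. Then for all t1, t2 ∈ ℝ and x, y ∈ ℝ^d: |b̃(t1,t2,x)| ≤ Γ2(1 +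 |x|^κ); ⟨x, b̃(t1,t2,x)⟩ ≤ α̃(t1,t2)|x|² + Λ̃(t1,t2); |b̃(t1,t2,x) − b̃(t1,t2,y)| ≤ L_N|x−y| whenever |x|, |y| ≤ N; and ∫_s^t (α̃(r+r1, r+r2)⁺ + Λ̃(r+r1, r+r2)) dr ≤ g(t−s) for all s ≤ t and r1, r2 ∈ ℝ. -/
open MeasureTheory

/-- a continuous quasi-periodic parent drift inherits, off the diagonal,
the polynomial growth, the one-sided coercivity, the local Lipschitz bounds and the
integral bound satisfied on the diagonal. -/
theorem statement14 {d : ℕ} (τ1 τ2 : ℝ) (hτ1 : 0 < τ1) (hτ2 : 0 < τ2)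
    (hirr : Irrational (τ1 / τ2))
    (b : ℝ → ℝ → EuclideanSpace ℝ (Fin d) → EuclideanSpace ℝ (Fin d))
    (hbcont : Continuous fun p : ℝ × ℝ × EuclideanSpace ℝ (Fin d) => b p.1 p.2.1 p.2.2)
    (hbper1 : ∀ (t1 t2 : ℝ) x, b (t1 + τ1) t2 x = b t1 t2 x)
    (hbper2 : ∀ (t1 t2 : ℝ) x, b t1 (t2 + τ2) x = b t1 t2 x)
    (α Λ : ℝ → ℝ → ℝ)
    (hαcont : Continuous fun p : ℝ × ℝ => α p.1 p.2)
    (hΛcont : Continuous fun p : ℝ × ℝ => Λ p.1 p.2)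
    (hΛ0 : ∀ t1 t2, 0 ≤ Λ t1 t2)
    (hαper1 : ∀ t1 t2, α (t1 + τ1) t2 = α t1 t2) (hαper2 : ∀ t1 t2, α t1 (t2 + τ2) = α t1 t2)
    (hΛper1 : ∀ t1 t2, Λ (t1 + τ1) t2 = Λ t1 t2) (hΛper2 : ∀ t1 t2, Λ t1 (t2 + τ2) = Λ t1 t2)
    (Γ2 κ : ℝ) (hΓ2 : 0 < Γ2) (hκ : 1 ≤ κ)
    (hgrowth : ∀ (t : ℝ) x, ‖b t t x‖ ≤ Γ2 * (1 + ‖x‖ ^ κ))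
    (hcoer : ∀ (t : ℝ) x, (inner ℝ x (b t t x) : ℝ) ≤ α t t * ‖x‖ ^ 2 + Λ t t)
    (L : ℕ → ℝ)
    (hlip : ∀ (N : ℕ) (t : ℝ) x y, ‖x‖ ≤ (N : ℝ) → ‖y‖ ≤ (N : ℝ) →
      ‖b t t x - b t t y‖ ≤ L N * ‖x - y‖)
    (g : ℝ → ℝ) (hgmono : MonotoneOn g (Set.Ici 0)) (hg0 : ∀ u, 0 ≤ u → 0 ≤ g u)
    (hint : ∀ s t : ℝ, s ≤ t → (∫ r in s..t, (max (α r r) 0 + Λ r r)) ≤ g (t - s)) :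
    (∀ (t1 t2 : ℝ) x, ‖b t1 t2 x‖ ≤ Γ2 * (1 + ‖x‖ ^ κ)) ∧
    (∀ (t1 t2 : ℝ) x, (inner ℝ x (b t1 t2 x) : ℝ) ≤ α t1 t2 * ‖x‖ ^ 2 + Λ t1 t2) ∧
    (∀ (N : ℕ) (t1 t2 : ℝ) x y, ‖x‖ ≤ (N : ℝ) → ‖y‖ ≤ (N : ℝ) →
      ‖b t1 t2 x - b t1 t2 y‖ ≤ L N * ‖x - y‖) ∧
    (∀ (r1 r2 s t : ℝ), s ≤ t →
      (∫ r in s..t, (max (α (r + r1) (r + r2)) 0 + Λ (r + r1) (r + r2))) ≤ g (t - s)) := by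
  -- integer-multiple periodicity
  have hb1 : ∀ (m : ℤ) (t1 t2 : ℝ) x, b (t1 + m * τ1) t2 x = b t1 t2 x := by
    intro m t1 t2 x
    have hper : Function.Periodic (fun s => b s t2 x) τ1 := fun s => hbper1 s t2 x
    exact (hper.int_mul m) t1
  have hb2 : ∀ (n : ℤ) (t1 t2 : ℝ) x, b t1 (t2 + n * τ2) x = b t1 t2 x := by
    intro n t1 t2 x
    have hper : Function.Periodic (fun s => b t1 s x) τ2 := fun s => hbper2 t1 s x
    exact (hper.int_mul n) t2
  have hα1 : ∀ (m : ℤ) (t1 t2 : ℝ), α (t1 + m * τ1) t2 = α t1 t2 := by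
    intro m t1 t2
    have hper : Function.Periodic (fun s => α s t2) τ1 := fun s => hαper1 s t2
    exact (hper.int_mul m) t1
  have hα2 : ∀ (n : ℤ) (t1 t2 : ℝ), α t1 (t2 + n * τ2) = α t1 t2 := by
    intro n t1 t2
    have hper : Function.Periodic (fun s => α t1 s) τ2 := fun s => hαper2 t1 s
    exact (hper.int_mul n) t2
  have hΛ1 : ∀ (m : ℤ) (t1 t2 : ℝ), Λ (t1 + m * τ1) t2 = Λ t1 t2 := by
    intro m t1 t2
    have hper : Function.Periodic (fun s => Λ s t2) τ1 := fun s => hΛper1 s t2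
    exact (hper.int_mul m) t1
  have hΛ2 : ∀ (n : ℤ) (t1 t2 : ℝ), Λ t1 (t2 + n * τ2) = Λ t1 t2 := by
    intro n t1 t2
    have hper : Function.Periodic (fun s => Λ t1 s) τ2 := fun s => hΛper2 t1 s
    exact (hper.int_mul n) t2
  -- the subgroup generated by τ1 and τ2 is dense
  have hS : Dense ((AddSubgroup.closure {τ1, τ2} : AddSubgroup ℝ) : Set ℝ) := by
    rcases (AddSubgroup.closure {τ1, τ2} : AddSubgroup ℝ).dense_or_cyclic with h | ⟨a, ha⟩
    · exact h
    · exfalso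
      have h1 : τ1 ∈ AddSubgroup.closure ({τ1, τ2} : Set ℝ) :=
        AddSubgroup.subset_closure (by simp)
      have h2 : τ2 ∈ AddSubgroup.closure ({τ1, τ2} : Set ℝ) :=
        AddSubgroup.subset_closure (by simp)
      rw [ha, AddSubgroup.mem_closure_singleton] at h1 h2
      obtain ⟨m, hm⟩ := h1
      obtain ⟨n, hn⟩ := h2
      have ha0 : a ≠ 0 := by
        rintro rfl; rw [smul_zero] at hm; exact absurd hm.symm hτ1.ne'
      have hn0 : (n : ℝ) ≠ 0 := by
        rintro h
        rw [zsmul_eq_mul, h, zero_mul] at hn; exact absurd hn.symm hτ2.ne'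
      apply hirr
      refine ⟨(m : ℚ) / (n : ℚ), ?_⟩
      rw [← hm, ← hn]
      push_cast
      field_simp
      ring
  -- density of the quasi-diagonal in the plane
  set D : Set (ℝ × ℝ) := {p | ∃ (u : ℝ) (m n : ℤ), p = (u + m * τ1, u + n * τ2)} with hD
  have hdense : ∀ (t1 t2 : ℝ) (C : Set (ℝ × ℝ)), IsClosed C → D ⊆ C → (t1, t2) ∈ C := by
    intro t1 t2 C hC hDC
    have : (t1, t2) ∈ closure D := by
      rw [Metric.mem_closure_iff]
      intro ε hε
      have := hS (t2 - t1)
      rw [Metric.mem_closure_iff] at this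
      obtain ⟨s, hs, hsd⟩ := this ε hε
      rw [SetLike.mem_coe, AddSubgroup.mem_closure_pair] at hs
      obtain ⟨m, n, hmn⟩ := hs
      refine ⟨(t1 + m * τ1 + ((-m : ℤ) : ℝ) * τ1, t1 + m * τ1 + n * τ2),
        ⟨t1 + m * τ1, -m, n, rfl⟩, ?_⟩
      rw [Prod.dist_eq]
      apply max_lt
      · have h1 : t1 + (m : ℝ) * τ1 + ((-m : ℤ) : ℝ) * τ1 = t1 := by push_cast; ring
        show dist t1 _ < ε
        rw [h1]; simpa using hε
      · have h2 : t1 + (m : ℝ) * τ1 + (n : ℝ) * τ2 = t1 + s := by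
          rw [← hmn]; push_cast [zsmul_eq_mul]; ring
        show dist t2 _ < ε
        rw [h2, Real.dist_eq]
        have h3 : t2 - (t1 + s) = (t2 - t1) - s := by ring
        rw [h3, ← Real.dist_eq]
        exact hsd
    rw [← hC.closure_eq]
    exact closure_mono hDC this
  refine ⟨?_, ?_, ?_, ?_⟩
  · -- growth
    intro t1 t2 x
    have hcx : Continuous fun p : ℝ × ℝ => (p.1, p.2, x) :=
      continuous_fst.prodMk (continuous_snd.prodMk continuous_const)
    exact hdense t1 t2 {p : ℝ × ℝ | ‖b p.1 p.2 x‖ ≤ Γ2 * (1 + ‖x‖ ^ κ)}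
      (isClosed_le ((hbcont.comp hcx).norm) continuous_const)
      (by rintro p ⟨u, m, n, rfl⟩
          simp only [Set.mem_setOf_eq, hb1, hb2]
          exact hgrowth u x)
  · -- coercivity
    intro t1 t2 x
    have hcx : Continuous fun p : ℝ × ℝ => (p.1, p.2, x) :=
      continuous_fst.prodMk (continuous_snd.prodMk continuous_const)
    exact hdense t1 t2
      {p : ℝ × ℝ | (inner ℝ x (b p.1 p.2 x) : ℝ) ≤ α p.1 p.2 * ‖x‖ ^ 2 + Λ p.1 p.2}
      (isClosed_le (continuous_const.inner (hbcont.comp hcx))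
        ((hαcont.mul continuous_const).add hΛcont))
      (by rintro p ⟨u, m, n, rfl⟩
          simp only [Set.mem_setOf_eq, hb1, hb2, hα1, hα2, hΛ1, hΛ2]
          exact hcoer u x)
  · -- Lipschitz
    intro N t1 t2 x y hx hy
    have hcx : Continuous fun p : ℝ × ℝ => (p.1, p.2, x) :=
      continuous_fst.prodMk (continuous_snd.prodMk continuous_const)
    have hcy : Continuous fun p : ℝ × ℝ => (p.1, p.2, y) :=
      continuous_fst.prodMk (continuous_snd.prodMk continuous_const)
    exact hdense t1 t2 {p : ℝ × ℝ | ‖b p.1 p.2 x - b p.1 p.2 y‖ ≤ L N * ‖x - y‖}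
      (isClosed_le (((hbcont.comp hcx).sub (hbcont.comp hcy)).norm) continuous_const)
      (by rintro p ⟨u, m, n, rfl⟩
          simp only [Set.mem_setOf_eq, hb1, hb2]
          exact hlip N u x y hx hy)
  · -- integral bound
    intro r1 r2 s t hst
    set F : ℝ × ℝ → ℝ → ℝ := fun q r => max (α (r + q.1) (r + q.2)) 0 + Λ (r + q.1) (r + q.2)
      with hF
    have hmap : Continuous fun p : (ℝ × ℝ) × ℝ => (p.2 + p.1.1, p.2 + p.1.2) :=
      (continuous_snd.add (continuous_fst.fst)).prodMk (continuous_snd.add continuous_fst.snd)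
    have hFcont : Continuous (Function.uncurry F) := by
      apply Continuous.add
      · exact (hαcont.comp hmap).max continuous_const
      · exact hΛcont.comp hmap
    have hΦcont : Continuous fun q : ℝ × ℝ => ∫ r in s..t, F q r :=
      intervalIntegral.continuous_parametric_intervalIntegral_of_continuous' hFcont s t
    have key := hdense r1 r2 {q : ℝ × ℝ | (∫ r in s..t, F q r) ≤ g (t - s)}
      (isClosed_le hΦcont continuous_const) ?_
    · exact key
    rintro p ⟨u, m, n, rfl⟩
    simp only [Set.mem_setOf_eq]
    have heq : ∀ r : ℝ,
        F (u + m * τ1, u + n * τ2) r = (fun r => max (α r r) 0 + Λ r r) (r + u) := by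
      intro r
      simp only [hF]
      have e1 : r + (u + (m : ℝ) * τ1) = (r + u) + (m : ℝ) * τ1 := by ring
      have e2 : r + (u + (n : ℝ) * τ2) = (r + u) + (n : ℝ) * τ2 := by ring
      rw [e1, e2, hα1, hα2, hΛ1, hΛ2]
    calc (∫ r in s..t, F (u + m * τ1, u + n * τ2) r)
        = ∫ r in s..t, (fun r => max (α r r) 0 + Λ r r) (r + u) := by
          simp only [heq]
      _ = ∫ r in s + u..t + u, (max (α r r) 0 + Λ r r) :=
          intervalIntegral.integral_comp_add_right (fun r => max (α r r) 0 + Λ r r) u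
      _ ≤ g (t + u - (s + u)) := hint (s + u) (t + u) (by linarith)
      _ = g (t - s) := by ring_nf
end

section
/- Let τ1, τ2 > 0 be such that the reciprocals of τ1 and τ2 are rationally linearly independent (equivalently τ1/τ2 is irrational). Let α̃ : ℝ × ℝ → ℝ be continuous, periodic with period τ1 in the first variable and period τ2 in the second variable, and suppose ∫_0^{τ1} ∫_0^{τ2} α̃(t1,t2) dt1 dt2 < 0. Then there exist Δ > 0 and ᾱ < 0 such that for all t, r1, r2 ∈ ℝ: ∫_t^{t+Δ} α̃(r + r1, r + r2) dr ≤ ᾱ. -/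
open Filter

noncomputable section

namespace Statement16Aux

open Complex Submodule Set ContinuousMap Algebra
open scoped Real

variable (τ1 τ2 : ℝ)

/-- characters on the 2-torus -/
def e (p : ℤ × ℤ) : C(AddCircle τ1 × AddCircle τ2, ℂ) :=
  ((fourier p.1).comp ⟨Prod.fst, continuous_fst⟩) *
    ((fourier p.2).comp ⟨Prod.snd, continuous_snd⟩)

lemma e_apply (p : ℤ × ℤ) (q : AddCircle τ1 × AddCircle τ2) :
    e τ1 τ2 p q = fourier p.1 q.1 * fourier p.2 q.2 := rfl

lemma e_zero : e τ1 τ2 0 = 1 := by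
  ext q; simp [e_apply, fourier_zero]

lemma e_add (p q : ℤ × ℤ) : e τ1 τ2 (p + q) = e τ1 τ2 p * e τ1 τ2 q := by
  ext x
  simp only [e_apply, Prod.fst_add, Prod.snd_add, fourier_add, ContinuousMap.mul_apply]
  ring

lemma e_neg (p : ℤ × ℤ) : e τ1 τ2 (-p) = star (e τ1 τ2 p) := by
  ext x
  simp only [e_apply, Prod.fst_neg, Prod.snd_neg, fourier_neg, ContinuousMap.star_apply,
    ContinuousMap.mul_apply, e_apply, star_mul', RingHom.map_mul, starRingEnd_apply]

/-- The star subalgebra generated by the characters. -/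
def eSubalgebra : StarSubalgebra ℂ C(AddCircle τ1 × AddCircle τ2, ℂ) where
  toSubalgebra := Algebra.adjoin ℂ (range (e τ1 τ2))
  star_mem' := by
    show Algebra.adjoin ℂ (range (e τ1 τ2)) ≤ star (Algebra.adjoin ℂ (range (e τ1 τ2)))
    refine adjoin_le ?_
    rintro - ⟨p, rfl⟩
    exact subset_adjoin ⟨-p, e_neg τ1 τ2 p⟩

lemma eSubalgebra_coe :
    Subalgebra.toSubmodule (eSubalgebra τ1 τ2).toSubalgebra = span ℂ (range (e τ1 τ2)) := by
  apply adjoin_eq_span_of_subset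
  refine Subset.trans ?_ Submodule.subset_span
  intro x hx
  refine Submonoid.closure_induction (fun _ => id) ⟨0, (e_zero τ1 τ2)⟩ ?_ hx
  rintro - - - - ⟨p, rfl⟩ ⟨q, rfl⟩
  exact ⟨p + q, e_add τ1 τ2 p q⟩

lemma eSubalgebra_separatesPoints [hτ1 : Fact (0 < τ1)] [hτ2 : Fact (0 < τ2)] :
    (eSubalgebra τ1 τ2).SeparatesPoints := by
  rintro ⟨x1, y1⟩ ⟨x2, y2⟩ hxy
  rcases (by
    by_contra h
    push_neg at h
    exact hxy (Prod.ext h.1 h.2) : x1 ≠ x2 ∨ y1 ≠ y2) with h | h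
  · refine ⟨_, ⟨e τ1 τ2 (1, 0), subset_adjoin ⟨(1, 0), rfl⟩, rfl⟩, ?_⟩
    simp only [e_apply, fourier_zero, mul_one, fourier_one]
    intro hc
    rw [Circle.coe_inj] at hc
    exact h (AddCircle.injective_toCircle hτ1.elim.ne' hc)
  · refine ⟨_, ⟨e τ1 τ2 (0, 1), subset_adjoin ⟨(0, 1), rfl⟩, rfl⟩, ?_⟩
    simp only [e_apply, fourier_zero, one_mul, fourier_one]
    intro hc
    rw [Circle.coe_inj] at hc
    exact h (AddCircle.injective_toCircle hτ2.elim.ne' hc)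

lemma span_e_closure_eq_top [Fact (0 < τ1)] [Fact (0 < τ2)] :
    (span ℂ (range (e τ1 τ2))).topologicalClosure = ⊤ := by
  rw [← eSubalgebra_coe]
  exact congr_arg (Subalgebra.toSubmodule <| StarSubalgebra.toSubalgebra ·)
    (ContinuousMap.starSubalgebra_topologicalClosure_eq_top_of_separatesPoints _
      (eSubalgebra_separatesPoints τ1 τ2))

lemma exists_lift (α : ℝ → ℝ → ℝ)
    (hcont : Continuous fun p : ℝ × ℝ => α p.1 p.2)
    (hper1 : ∀ t1 t2, α (t1 + τ1) t2 = α t1 t2)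
    (hper2 : ∀ t1 t2, α t1 (t2 + τ2) = α t1 t2) :
    ∃ β : C(AddCircle τ1 × AddCircle τ2, ℂ),
      ∀ x y : ℝ, β ((x : AddCircle τ1), (y : AddCircle τ2)) = (α x y : ℂ) := by
  have per2 : ∀ x : ℝ, Function.Periodic (fun y => (α x y : ℂ)) τ2 := by
    intro x y; simp [hper2]
  have per1 : Function.Periodic (fun x => (per2 x).lift) τ1 := by
    intro x
    funext qy
    induction qy using QuotientAddGroup.induction_on with
    | H y => simp only [Function.Periodic.lift_coe, hper1]
  have hβfun : ∀ x y : ℝ,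
      (fun q : AddCircle τ1 × AddCircle τ2 => per1.lift q.1 q.2)
        ((x : AddCircle τ1), (y : AddCircle τ2)) = (α x y : ℂ) := by
    intro x y
    simp only [Function.Periodic.lift_coe]
  refine ⟨⟨fun q => per1.lift q.1 q.2, ?_⟩, hβfun⟩
  have hq : IsOpenQuotientMap
      (Prod.map (QuotientAddGroup.mk : ℝ → AddCircle τ1)
        (QuotientAddGroup.mk : ℝ → AddCircle τ2)) :=
    QuotientAddGroup.isOpenQuotientMap_mk.prodMap QuotientAddGroup.isOpenQuotientMap_mk
  apply hq.isQuotientMap.continuous_iff.mpr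
  have : ((fun q : AddCircle τ1 × AddCircle τ2 => per1.lift q.1 q.2) ∘
      (Prod.map (QuotientAddGroup.mk : ℝ → AddCircle τ1)
        (QuotientAddGroup.mk : ℝ → AddCircle τ2))) = fun p : ℝ × ℝ => (α p.1 p.2 : ℂ) := by
    funext p
    exact hβfun p.1 p.2
  rw [this]
  exact Complex.continuous_ofReal.comp hcont

def a (p : ℤ × ℤ) : ℂ := ((2 * π * p.1 / τ1 : ℝ) : ℂ) * I

def b (p : ℤ × ℤ) : ℂ := ((2 * π * p.2 / τ2 : ℝ) : ℂ) * I

def w (p : ℤ × ℤ) : ℂ := a τ1 p + b τ2 p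

lemma a_zero : a τ1 (0 : ℤ × ℤ) = 0 := by simp [a]

lemma b_zero : b τ2 (0 : ℤ × ℤ) = 0 := by simp [b]

lemma w_zero : w τ1 τ2 (0 : ℤ × ℤ) = 0 := by simp [w, a_zero, b_zero]

lemma e_coe (p : ℤ × ℤ) (x y : ℝ) :
    e τ1 τ2 p ((x : AddCircle τ1), (y : AddCircle τ2)) =
      Complex.exp (a τ1 p * x) * Complex.exp (b τ2 p * y) := by
  rw [e_apply]
  simp only [fourier_coe_apply]
  congr 1 <;> · congr 1; push_cast [a, b]; ring

lemma e_coe' (p : ℤ × ℤ) (x y : ℝ) :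
    e τ1 τ2 p ((x : AddCircle τ1), (y : AddCircle τ2)) =
      Complex.exp (a τ1 p * x + b τ2 p * y) := by
  rw [e_coe, Complex.exp_add]

lemma norm_exp_aux (u v x y : ℝ) :
    ‖Complex.exp ((u : ℂ) * I * x + (v : ℂ) * I * y)‖ = 1 := by
  rw [Complex.norm_exp]
  have : ((u : ℂ) * I * x + (v : ℂ) * I * y).re = 0 := by
    simp [Complex.add_re, Complex.mul_re]
  rw [this, Real.exp_zero]

lemma norm_exp_ab (p : ℤ × ℤ) (x y : ℝ) :
    ‖Complex.exp (a τ1 p * x + b τ2 p * y)‖ = 1 := norm_exp_aux _ _ x y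

lemma norm_exp_w (p : ℤ × ℤ) (s : ℝ) : ‖Complex.exp (w τ1 τ2 p * s)‖ = 1 := by
  have : w τ1 τ2 p * s = a τ1 p * s + b τ2 p * s := by rw [w]; ring
  rw [this]; exact norm_exp_aux _ _ s s

lemma w_ne_zero (hτ1 : 0 < τ1) (hτ2 : 0 < τ2) (hirr : Irrational (τ1 / τ2))
    {p : ℤ × ℤ} (hp : p ≠ 0) : w τ1 τ2 p ≠ 0 := by
  have hform : w τ1 τ2 p = ((2 * π * (p.1 / τ1 + p.2 / τ2) : ℝ) : ℂ) * I := by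
    rw [w, a, b]; push_cast; ring
  rw [hform]
  refine mul_ne_zero (Complex.ofReal_ne_zero.mpr ?_) Complex.I_ne_zero
  refine mul_ne_zero (by positivity) ?_
  intro hsum
  rcases eq_or_ne p.2 0 with h2 | h2
  · have h1 : (p.1 : ℝ) / τ1 = 0 := by rw [h2] at hsum; simpa using hsum
    have h1' : p.1 = 0 := by field_simp at h1; simpa using h1
    exact hp (Prod.ext h1' h2)
  · have h2' : (p.2 : ℝ) ≠ 0 := Int.cast_ne_zero.mpr h2
    have hcross : (p.1 : ℝ) * τ2 = -(p.2 * τ1) := by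
      field_simp at hsum
      linarith
    refine hirr ⟨-(p.1 : ℚ) / p.2, ?_⟩
    have : ((-(p.1 : ℚ) / p.2 : ℚ) : ℝ) = -(p.1 : ℝ) / p.2 := by push_cast; ring
    rw [this, div_eq_div_iff h2' hτ2.ne']
    linarith

lemma integral_exp_aux (L : ℝ) (hL : 0 < L) (m : ℤ) :
    (∫ x in (0:ℝ)..L, Complex.exp (((2 * π * m / L : ℝ) : ℂ) * I * x)) =
      if m = 0 then (L : ℂ) else 0 := by
  rcases eq_or_ne m 0 with hm | hm
  · subst hm
    simp [intervalIntegral.integral_const, Complex.real_smul]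
  · rw [if_neg hm]
    have hc : ((2 * π * m / L : ℝ) : ℂ) * I ≠ 0 := by
      refine mul_ne_zero (Complex.ofReal_ne_zero.mpr ?_) Complex.I_ne_zero
      have : (m : ℝ) ≠ 0 := Int.cast_ne_zero.mpr hm
      positivity
    rw [integral_exp_mul_complex hc]
    have h1 : ((2 * π * m / L : ℝ) : ℂ) * I * L = m * (2 * (π : ℂ) * I) := by
      have hL' : (L : ℂ) ≠ 0 := Complex.ofReal_ne_zero.mpr hL.ne'
      push_cast
      field_simp
    rw [h1, Complex.exp_int_mul_two_pi_mul_I]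
    simp

lemma cont_exp_lin (z : ℂ) : Continuous fun r : ℝ => Complex.exp (z * r) :=
  Complex.continuous_exp.comp (continuous_const.mul Complex.continuous_ofReal)

lemma line_integral_repr (c : (ℤ × ℤ) →₀ ℂ) (t Δ r1 r2 : ℝ) :
    (∫ r in t..(t + Δ), (c.sum fun p z => z • e τ1 τ2 p)
        ((↑(r + r1) : AddCircle τ1), (↑(r + r2) : AddCircle τ2))) =
      c 0 * Δ + ∑ p ∈ c.support.erase 0,
        (c p * Complex.exp (a τ1 p * r1 + b τ2 p * r2)) *
          ∫ r in t..(t + Δ), Complex.exp (w τ1 τ2 p * r) := by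
  have hpt : ∀ r : ℝ, (c.sum fun p z => z • e τ1 τ2 p)
      ((↑(r + r1) : AddCircle τ1), (↑(r + r2) : AddCircle τ2)) =
      ∑ p ∈ c.support, (c p * Complex.exp (a τ1 p * r1 + b τ2 p * r2)) *
        Complex.exp (w τ1 τ2 p * r) := by
    intro r
    rw [Finsupp.sum, ContinuousMap.sum_apply]
    refine Finset.sum_congr rfl fun p _ => ?_
    rw [ContinuousMap.smul_apply, smul_eq_mul, e_coe']
    have harg : a τ1 p * ↑(r + r1) + b τ2 p * ↑(r + r2) =
        (a τ1 p * r1 + b τ2 p * r2) + w τ1 τ2 p * r := by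
      rw [w]; push_cast; ring
    rw [harg, Complex.exp_add]
    ring
  rw [intervalIntegral.integral_congr (g := fun r =>
      ∑ p ∈ c.support, (c p * Complex.exp (a τ1 p * r1 + b τ2 p * r2)) *
        Complex.exp (w τ1 τ2 p * r)) (fun r _ => hpt r)]
  rw [intervalIntegral.integral_finset_sum (fun p _ =>
    (Continuous.intervalIntegrable (u := fun r : ℝ => _ * Complex.exp (_ * (r : ℂ)))
      (continuous_const.mul (cont_exp_lin _)) _ _))]
  have hterm : ∀ p : ℤ × ℤ,
      (∫ r in t..(t + Δ), (c p * Complex.exp (a τ1 p * r1 + b τ2 p * r2)) *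
        Complex.exp (w τ1 τ2 p * r)) =
      (c p * Complex.exp (a τ1 p * r1 + b τ2 p * r2)) *
        ∫ r in t..(t + Δ), Complex.exp (w τ1 τ2 p * r) := fun p =>
    intervalIntegral.integral_const_mul _ _
  simp_rw [hterm]
  have h00 : (c 0 * Complex.exp (a τ1 0 * r1 + b τ2 0 * r2)) *
      (∫ r in t..(t + Δ), Complex.exp (w τ1 τ2 0 * r)) = c 0 * Δ := by
    rw [a_zero, b_zero, w_zero]
    simp [intervalIntegral.integral_const, Complex.real_smul]
  by_cases h : (0 : ℤ × ℤ) ∈ c.support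
  · rw [← Finset.add_sum_erase _ _ h, h00]
  · rw [Finset.erase_eq_of_notMem h, Finsupp.notMem_support_iff.mp h, zero_mul, zero_add]

lemma line_integral_bound (hτ1 : 0 < τ1) (hτ2 : 0 < τ2) (hirr : Irrational (τ1 / τ2))
    (c : (ℤ × ℤ) →₀ ℂ) (t Δ r1 r2 : ℝ) :
    ‖(∫ r in t..(t + Δ), (c.sum fun p z => z • e τ1 τ2 p)
        ((↑(r + r1) : AddCircle τ1), (↑(r + r2) : AddCircle τ2))) - c 0 * Δ‖ ≤
      ∑ p ∈ c.support.erase 0, ‖c p‖ * (2 / ‖w τ1 τ2 p‖) := by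
  rw [line_integral_repr, add_sub_cancel_left]
  refine (norm_sum_le _ _).trans (Finset.sum_le_sum fun p hp => ?_)
  have hp0 : p ≠ 0 := Finset.ne_of_mem_erase hp
  have hw : w τ1 τ2 p ≠ 0 := w_ne_zero τ1 τ2 hτ1 hτ2 hirr hp0
  rw [norm_mul, norm_mul, norm_exp_ab, mul_one]
  refine mul_le_mul_of_nonneg_left ?_ (norm_nonneg _)
  rw [integral_exp_mul_complex hw, norm_div]
  have h2 : ‖Complex.exp (w τ1 τ2 p * ↑(t + Δ)) - Complex.exp (w τ1 τ2 p * ↑t)‖ ≤ 2 := by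
    refine (norm_sub_le _ _).trans ?_
    rw [norm_exp_w, norm_exp_w]
    norm_num
  gcongr

lemma double_integral_repr (hτ1 : 0 < τ1) (hτ2 : 0 < τ2) (c : (ℤ × ℤ) →₀ ℂ) :
    (∫ x in (0:ℝ)..τ1, ∫ y in (0:ℝ)..τ2, (c.sum fun p z => z • e τ1 τ2 p)
        ((x : AddCircle τ1), (y : AddCircle τ2))) = c 0 * (τ1 * τ2) := by
  have hb : ∀ p : ℤ × ℤ, (∫ y in (0:ℝ)..τ2, Complex.exp (b τ2 p * y)) =
      if p.2 = 0 then (τ2 : ℂ) else 0 := by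
    intro p
    have := integral_exp_aux τ2 hτ2 p.2
    simpa [b, mul_assoc] using this
  have ha : ∀ p : ℤ × ℤ, (∫ x in (0:ℝ)..τ1, Complex.exp (a τ1 p * x)) =
      if p.1 = 0 then (τ1 : ℂ) else 0 := by
    intro p
    have := integral_exp_aux τ1 hτ1 p.1
    simpa [a, mul_assoc] using this
  have hinner : ∀ x : ℝ, (∫ y in (0:ℝ)..τ2, (c.sum fun p z => z • e τ1 τ2 p)
      ((x : AddCircle τ1), (y : AddCircle τ2))) =
      ∑ p ∈ c.support, (c p * (if p.2 = 0 then (τ2 : ℂ) else 0)) *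
        Complex.exp (a τ1 p * x) := by
    intro x
    have hpt : ∀ y : ℝ, (c.sum fun p z => z • e τ1 τ2 p)
        ((x : AddCircle τ1), (y : AddCircle τ2)) =
        ∑ p ∈ c.support, (c p * Complex.exp (a τ1 p * x)) * Complex.exp (b τ2 p * y) := by
      intro y
      rw [Finsupp.sum, ContinuousMap.sum_apply]
      refine Finset.sum_congr rfl fun p _ => ?_
      rw [ContinuousMap.smul_apply, smul_eq_mul, e_coe]
      ring
    rw [intervalIntegral.integral_congr (g := fun y =>
        ∑ p ∈ c.support, (c p * Complex.exp (a τ1 p * x)) * Complex.exp (b τ2 p * y))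
      (fun y _ => hpt y)]
    rw [intervalIntegral.integral_finset_sum (fun p _ =>
      (Continuous.intervalIntegrable (u := fun r : ℝ => _ * Complex.exp (_ * (r : ℂ)))
      (continuous_const.mul (cont_exp_lin _)) _ _))]
    refine Finset.sum_congr rfl fun p _ => ?_
    rw [intervalIntegral.integral_const_mul, hb p]
    ring
  rw [intervalIntegral.integral_congr (g := fun x =>
      ∑ p ∈ c.support, (c p * (if p.2 = 0 then (τ2 : ℂ) else 0)) * Complex.exp (a τ1 p * x))
    (fun x _ => hinner x)]
  rw [intervalIntegral.integral_finset_sum (fun p _ =>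
    (Continuous.intervalIntegrable (u := fun r : ℝ => _ * Complex.exp (_ * (r : ℂ)))
      (continuous_const.mul (cont_exp_lin _)) _ _))]
  have : ∀ p ∈ c.support, (∫ x in (0:ℝ)..τ1,
      (c p * (if p.2 = 0 then (τ2 : ℂ) else 0)) * Complex.exp (a τ1 p * x)) =
      (c p * (if p.2 = 0 then (τ2 : ℂ) else 0)) * (if p.1 = 0 then (τ1 : ℂ) else 0) := by
    intro p _
    rw [intervalIntegral.integral_const_mul, ha p]
  rw [Finset.sum_congr rfl this]
  rw [Finset.sum_eq_single 0]
  · simp; ring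
  · intro p _ hp0
    rcases (by
      by_contra h
      push_neg at h
      exact hp0 (Prod.ext h.1 h.2) : p.1 ≠ 0 ∨ p.2 ≠ 0) with h | h
    · rw [if_neg h, mul_zero]
    · rw [if_neg h, mul_zero, zero_mul]
  · intro h
    rw [Finsupp.notMem_support_iff.mp h, zero_mul, zero_mul]

end Statement16Aux

open Statement16Aux Complex in
/-- if the torus average of a continuous quasi-periodic function is
negative, then its shifted time averages over intervals of some fixed length `Δ` are
uniformly negative. -/
theorem statement16 (τ1 τ2 : ℝ) (hτ1 : 0 < τ1) (hτ2 : 0 < τ2)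
    (hirr : Irrational (τ1 / τ2))
    (α : ℝ → ℝ → ℝ) (hcont : Continuous fun p : ℝ × ℝ => α p.1 p.2)
    (hper1 : ∀ t1 t2, α (t1 + τ1) t2 = α t1 t2)
    (hper2 : ∀ t1 t2, α t1 (t2 + τ2) = α t1 t2)
    (hneg : (∫ t1 in (0 : ℝ)..τ1, ∫ t2 in (0 : ℝ)..τ2, α t1 t2) < 0) :
    ∃ Δ > (0 : ℝ), ∃ abar < (0 : ℝ), ∀ t r1 r2 : ℝ,
      (∫ r in t..(t + Δ), α (r + r1) (r + r2)) ≤ abar := by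
  haveI F1 : Fact (0 < τ1) := ⟨hτ1⟩
  haveI F2 : Fact (0 < τ2) := ⟨hτ2⟩
  obtain ⟨β, hβ⟩ := exists_lift τ1 τ2 α hcont hper1 hper2
  set M : ℝ := ∫ t1 in (0:ℝ)..τ1, ∫ t2 in (0:ℝ)..τ2, α t1 t2 with hMdef
  have hM : M < 0 := hneg
  set ε : ℝ := -M / (4 * (τ1 * τ2)) with hεdef
  have hεpos : 0 < ε := div_pos (by linarith) (by positivity)
  -- density of trigonometric polynomials
  have hmem : β ∈ closure ((Submodule.span ℂ (Set.range (e τ1 τ2)) :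
      Submodule ℂ C(AddCircle τ1 × AddCircle τ2, ℂ)) : Set _) := by
    rw [← Submodule.topologicalClosure_coe, span_e_closure_eq_top τ1 τ2]
    trivial
  obtain ⟨g, hgmem, hgdist⟩ := Metric.mem_closure_iff.mp hmem ε hεpos
  obtain ⟨c, hc⟩ := Finsupp.mem_span_range_iff_exists_finsupp.mp hgmem
  set gm : C(AddCircle τ1 × AddCircle τ2, ℂ) := c.sum fun p z => z • e τ1 τ2 p with hgmdef
  -- pointwise approximation
  have hpt : ∀ q, ‖β q - gm q‖ ≤ ε := by
    intro q
    rw [hc]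
    calc ‖β q - g q‖ = dist (β q) (g q) := (dist_eq_norm _ _).symm
      _ ≤ dist β g := ContinuousMap.dist_apply_le_dist q
      _ ≤ ε := hgdist.le
  -- continuity facts
  have hco1 : Continuous ((↑) : ℝ → AddCircle τ1) :=
    QuotientAddGroup.isOpenQuotientMap_mk.continuous
  have hco2 : Continuous ((↑) : ℝ → AddCircle τ2) :=
    QuotientAddGroup.isOpenQuotientMap_mk.continuous
  have hπcont : Continuous (fun pr : ℝ × ℝ =>
      (((pr.1 : AddCircle τ1), (pr.2 : AddCircle τ2)) : AddCircle τ1 × AddCircle τ2)) :=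
    (hco1.comp continuous_fst).prodMk (hco2.comp continuous_snd)
  have hgβup : Continuous fun pr : ℝ × ℝ =>
      β ((pr.1 : AddCircle τ1), (pr.2 : AddCircle τ2)) := β.continuous.comp hπcont
  have hggup : Continuous fun pr : ℝ × ℝ =>
      gm ((pr.1 : AddCircle τ1), (pr.2 : AddCircle τ2)) := gm.continuous.comp hπcont
  -- the mean of β over the box is M
  have hK : (∫ x in (0:ℝ)..τ1, ∫ y in (0:ℝ)..τ2,
      β ((x : AddCircle τ1), (y : AddCircle τ2))) = (M : ℂ) := by
    have h1 : ∀ x : ℝ, (∫ y in (0:ℝ)..τ2, β ((x : AddCircle τ1), (y : AddCircle τ2))) =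
        ((∫ y in (0:ℝ)..τ2, α x y : ℝ) : ℂ) := by
      intro x
      rw [intervalIntegral.integral_congr (g := fun y : ℝ => ((α x y : ℝ) : ℂ))
        (fun y _ => hβ x y)]
      exact intervalIntegral.integral_ofReal
    rw [intervalIntegral.integral_congr (g := fun x : ℝ =>
        ((∫ y in (0:ℝ)..τ2, α x y : ℝ) : ℂ)) (fun x _ => h1 x)]
    exact intervalIntegral.integral_ofReal
  -- inner difference bound
  have hinner_bound : ∀ x : ℝ,
      ‖(∫ y in (0:ℝ)..τ2, gm ((x : AddCircle τ1), (y : AddCircle τ2))) -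
        (∫ y in (0:ℝ)..τ2, β ((x : AddCircle τ1), (y : AddCircle τ2)))‖ ≤ ε * τ2 := by
    intro x
    have hcy1 : Continuous fun y : ℝ => gm ((x : AddCircle τ1), (y : AddCircle τ2)) :=
      hggup.comp (continuous_const.prodMk continuous_id)
    have hcy2 : Continuous fun y : ℝ => β ((x : AddCircle τ1), (y : AddCircle τ2)) :=
      hgβup.comp (continuous_const.prodMk continuous_id)
    rw [← intervalIntegral.integral_sub (hcy1.intervalIntegrable _ _)
      (hcy2.intervalIntegrable _ _)]
    have h2 := intervalIntegral.norm_integral_le_of_norm_le_const (a := (0:ℝ)) (b := τ2)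
      (C := ε) (f := fun y => gm ((x : AddCircle τ1), (y : AddCircle τ2)) -
        β ((x : AddCircle τ1), (y : AddCircle τ2)))
      (fun y _ => by rw [norm_sub_rev]; exact hpt _)
    calc _ ≤ ε * |τ2 - 0| := h2
      _ = ε * τ2 := by rw [sub_zero, abs_of_pos hτ2]
  -- difference between the mean coefficient and M
  have hdiff : ‖c 0 * ((τ1 : ℂ) * τ2) - (M : ℂ)‖ ≤ ε * τ2 * τ1 := by
    rw [← double_integral_repr τ1 τ2 hτ1 hτ2 c, ← hgmdef, ← hK]
    have hFg : Continuous fun x : ℝ => ∫ y in (0:ℝ)..τ2,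
        gm ((x : AddCircle τ1), (y : AddCircle τ2)) :=
      intervalIntegral.continuous_parametric_intervalIntegral_of_continuous'
        (f := fun (x : ℝ) (y : ℝ) => gm ((x : AddCircle τ1), (y : AddCircle τ2)))
        (by exact hggup) 0 τ2
    have hFβ : Continuous fun x : ℝ => ∫ y in (0:ℝ)..τ2,
        β ((x : AddCircle τ1), (y : AddCircle τ2)) :=
      intervalIntegral.continuous_parametric_intervalIntegral_of_continuous'
        (f := fun (x : ℝ) (y : ℝ) => β ((x : AddCircle τ1), (y : AddCircle τ2)))
        (by exact hgβup) 0 τ2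
    rw [← intervalIntegral.integral_sub (hFg.intervalIntegrable _ _)
      (hFβ.intervalIntegrable _ _)]
    have h3 := intervalIntegral.norm_integral_le_of_norm_le_const (a := (0:ℝ)) (b := τ1)
      (C := ε * τ2) (f := fun x =>
        (∫ y in (0:ℝ)..τ2, gm ((x : AddCircle τ1), (y : AddCircle τ2))) -
        ∫ y in (0:ℝ)..τ2, β ((x : AddCircle τ1), (y : AddCircle τ2)))
      (fun x _ => hinner_bound x)
    calc _ ≤ ε * τ2 * |τ1 - 0| := h3
      _ = ε * τ2 * τ1 := by rw [sub_zero, abs_of_pos hτ1]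
  -- the mean coefficient is quite negative
  have hc0re : (c 0).re ≤ -3 * ε := by
    have hP : (0:ℝ) < τ1 * τ2 := by positivity
    have h3 : (c 0 * ((τ1 : ℂ) * τ2)).re = (c 0).re * (τ1 * τ2) := by
      rw [← Complex.ofReal_mul]
      simp [Complex.mul_re]
    have h2 : (c 0).re * (τ1 * τ2) - M ≤ ε * τ2 * τ1 := by
      have h2a := Complex.re_le_norm (c 0 * ((τ1 : ℂ) * τ2) - (M : ℂ))
      have h2b := h2a.trans hdiff
      rwa [Complex.sub_re, Complex.ofReal_re, h3] at h2b
    have hMε : M = -(4 * (τ1 * τ2)) * ε := by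
      rw [hεdef]; field_simp
    have h4 : (c 0).re * (τ1 * τ2) ≤ (-3 * ε) * (τ1 * τ2) := by nlinarith
    exact le_of_mul_le_mul_right h4 hP
  -- choose Δ
  set C : ℝ := ∑ p ∈ c.support.erase 0, ‖c p‖ * (2 / ‖w τ1 τ2 p‖) with hCdef
  have hC0 : 0 ≤ C :=
    Finset.sum_nonneg fun p _ => mul_nonneg (norm_nonneg _) (by positivity)
  have hΔpos : 0 < (C + 1) / ε := div_pos (by linarith) hεpos
  refine ⟨(C + 1) / ε, hΔpos, -1, by norm_num, ?_⟩
  intro t r1 r2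
  set Δ : ℝ := (C + 1) / ε with hΔdef
  have hεΔ : ε * Δ = C + 1 := by rw [hΔdef]; field_simp
  -- line integrals
  have hline : Continuous fun r : ℝ =>
      (((↑(r + r1) : AddCircle τ1), (↑(r + r2) : AddCircle τ2)) :
        AddCircle τ1 × AddCircle τ2) :=
    hπcont.comp ((continuous_id.add continuous_const).prodMk
      (continuous_id.add continuous_const))
  have hIβ : (∫ r in t..(t + Δ), β ((↑(r + r1) : AddCircle τ1), (↑(r + r2) : AddCircle τ2))) =
      ((∫ r in t..(t + Δ), α (r + r1) (r + r2) : ℝ) : ℂ) := by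
    rw [intervalIntegral.integral_congr (g := fun r : ℝ => ((α (r + r1) (r + r2) : ℝ) : ℂ))
      (fun r _ => hβ _ _)]
    exact intervalIntegral.integral_ofReal
  have herr : ‖(∫ r in t..(t + Δ), β ((↑(r + r1) : AddCircle τ1), (↑(r + r2) : AddCircle τ2))) -
      (∫ r in t..(t + Δ), gm ((↑(r + r1) : AddCircle τ1), (↑(r + r2) : AddCircle τ2)))‖ ≤
      ε * Δ := by
    rw [← intervalIntegral.integral_sub
      ((show Continuous fun r : ℝ =>
          β ((↑(r + r1) : AddCircle τ1), (↑(r + r2) : AddCircle τ2)) from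
        β.continuous.comp hline).intervalIntegrable _ _)
      ((show Continuous fun r : ℝ =>
          gm ((↑(r + r1) : AddCircle τ1), (↑(r + r2) : AddCircle τ2)) from
        gm.continuous.comp hline).intervalIntegrable _ _)]
    have h2 := intervalIntegral.norm_integral_le_of_norm_le_const (a := t) (b := t + Δ)
      (C := ε) (f := fun r =>
        β ((↑(r + r1) : AddCircle τ1), (↑(r + r2) : AddCircle τ2)) -
        gm ((↑(r + r1) : AddCircle τ1), (↑(r + r2) : AddCircle τ2)))
      (fun r _ => hpt _)
    calc _ ≤ ε * |t + Δ - t| := h2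
      _ = ε * Δ := by rw [add_sub_cancel_left, abs_of_pos hΔpos]
  have hbound : ‖(∫ r in t..(t + Δ),
      gm ((↑(r + r1) : AddCircle τ1), (↑(r + r2) : AddCircle τ2))) - c 0 * Δ‖ ≤ C := by
    rw [hgmdef]
    exact line_integral_bound τ1 τ2 hτ1 hτ2 hirr c t Δ r1 r2
  -- final arithmetic
  have hre : (∫ r in t..(t + Δ), α (r + r1) (r + r2)) =
      (∫ r in t..(t + Δ), β ((↑(r + r1) : AddCircle τ1), (↑(r + r2) : AddCircle τ2))).re := by
    rw [hIβ, Complex.ofReal_re]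
  rw [hre]
  set Iβ : ℂ := ∫ r in t..(t + Δ), β ((↑(r + r1) : AddCircle τ1), (↑(r + r2) : AddCircle τ2))
    with hIβdef
  set Ig : ℂ := ∫ r in t..(t + Δ), gm ((↑(r + r1) : AddCircle τ1), (↑(r + r2) : AddCircle τ2))
    with hIgdef
  have h5 : (c 0 * (Δ : ℂ)).re = (c 0).re * Δ := by simp [Complex.mul_re]
  have h6 : Iβ.re - (c 0).re * Δ ≤ ε * Δ + C := by
    have heq : Iβ.re - (c 0).re * Δ = (Iβ - c 0 * (Δ : ℂ)).re := by
      rw [Complex.sub_re, h5]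
    rw [heq]
    refine (Complex.re_le_norm _).trans ?_
    calc ‖Iβ - c 0 * (Δ : ℂ)‖ = ‖(Iβ - Ig) + (Ig - c 0 * (Δ : ℂ))‖ := by ring_nf
      _ ≤ ‖Iβ - Ig‖ + ‖Ig - c 0 * (Δ : ℂ)‖ := norm_add_le _ _
      _ ≤ ε * Δ + C := add_le_add herr hbound
  have h7 : (c 0).re * Δ ≤ -3 * (ε * Δ) := by
    have := mul_le_mul_of_nonneg_right hc0re hΔpos.le
    nlinarith
  linarith
end
end

section
/- Let α : ℝ → ℝ be locally Lebesgue integrable, let M > 0, a > 0, T > 0 and Δ > 0, and suppose: α_r ≥ −M for almost every r ≤ 0, and ∫_{−nΔ}^0 α_r dr ≤ −a·n·Δ for every integer n with n·Δ ≥ T. Put ς0 = min(a/2, M) and, for each integer n ≥ 1, let n^{ς0,Δ} be the number of indices i ∈ {1, …, n} with ∫_{−iΔ}^{−(i−1)Δ} α_r dr ≤ −ς0·Δ. Then for every integer n with n·Δ ≥ T: n^{ς0,Δ} / n ≥ a/(2M). In particular liminf_{n→∞} n^{ς0,Δ}/n ≥ a/(2M) > 0. -/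
open MeasureTheory Filter

/-- counting the proportion of unit intervals (of length `Δ`) on which a
locally integrable function `α`, bounded below by `-M` and with sufficiently negative
long-time averages, has average at most `-ς₀ = -min(a/2, M)`. -/
theorem statement18 (α : ℝ → ℝ) (hloc : LocallyIntegrable α)
    (M a T Δ : ℝ) (hM : 0 < M) (ha : 0 < a) (hT : 0 < T) (hΔ : 0 < Δ)
    (hbound : ∀ᵐ r ∂(volume.restrict (Set.Iic (0 : ℝ))), -M ≤ α r)
    (hdecay : ∀ n : ℕ, T ≤ n * Δ →
      (∫ r in (-((n : ℝ) * Δ))..(0 : ℝ), α r) ≤ -(a * n * Δ)) :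
    (∀ n : ℕ, T ≤ n * Δ →
      a / (2 * M) ≤
        ((((Finset.Icc 1 n).filter fun i : ℕ =>
            (∫ r in (-((i : ℝ) * Δ))..(-(((i : ℝ) - 1) * Δ)), α r) ≤
              -(min (a / 2) M * Δ)).card : ℝ) / (n : ℝ))) ∧
    a / (2 * M) ≤ liminf (fun n : ℕ =>
        ((((Finset.Icc 1 n).filter fun i : ℕ =>
            (∫ r in (-((i : ℝ) * Δ))..(-(((i : ℝ) - 1) * Δ)), α r) ≤
              -(min (a / 2) M * Δ)).card : ℝ) / (n : ℝ))) atTop ∧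
    0 < liminf (fun n : ℕ =>
        ((((Finset.Icc 1 n).filter fun i : ℕ =>
            (∫ r in (-((i : ℝ) * Δ))..(-(((i : ℝ) - 1) * Δ)), α r) ≤
              -(min (a / 2) M * Δ)).card : ℝ) / (n : ℝ))) atTop := by
  classical
  have hint : ∀ x y : ℝ, IntervalIntegrable α volume x y := fun x y =>
    (hloc.integrableOn_isCompact isCompact_uIcc).intervalIntegrable
  set ς : ℝ := min (a / 2) M with hςdef
  have hς0 : 0 < ς := lt_min (by linarith) hM
  have hςa : ς ≤ a / 2 := min_le_left _ _
  -- lower bound on each unit-interval integral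
  have hIlow : ∀ i : ℕ, 1 ≤ i →
      -(M * Δ) ≤ ∫ r in (-((i : ℝ) * Δ))..(-(((i : ℝ) - 1) * Δ)), α r := by
    intro i hi
    have h1 : (1 : ℝ) ≤ (i : ℝ) := by exact_mod_cast hi
    have hab : -((i : ℝ) * Δ) ≤ -(((i : ℝ) - 1) * Δ) := by nlinarith
    have hsub : Set.Icc (-((i : ℝ) * Δ)) (-(((i : ℝ) - 1) * Δ)) ⊆ Set.Iic 0 :=
      fun x hx => le_trans hx.2 (by nlinarith)
    have hae : ∀ᵐ r ∂(volume.restrict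
        (Set.Icc (-((i : ℝ) * Δ)) (-(((i : ℝ) - 1) * Δ)))), (fun _ => -M) r ≤ α r :=
      ae_restrict_of_ae_restrict_of_subset hsub hbound
    have hmono := intervalIntegral.integral_mono_ae_restrict hab
      (intervalIntegrable_const) (hint _ _) hae
    rw [intervalIntegral.integral_const, smul_eq_mul] at hmono
    have : (-(((i : ℝ) - 1) * Δ) - -((i : ℝ) * Δ)) * (-M) = -(M * Δ) := by ring
    linarith
  -- key pointwise estimate
  have key : ∀ n : ℕ, T ≤ n * Δ →
      a / (2 * M) ≤
        ((((Finset.Icc 1 n).filter fun i : ℕ =>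
            (∫ r in (-((i : ℝ) * Δ))..(-(((i : ℝ) - 1) * Δ)), α r) ≤
              -(ς * Δ)).card : ℝ) / (n : ℝ)) := by
    intro n hn
    have hn0 : 0 < n := by
      rcases Nat.eq_zero_or_pos n with h | h
      · subst h; simp at hn; linarith
      · exact h
    have hn0' : (0 : ℝ) < n := by exact_mod_cast hn0
    set p : ℕ → Prop := fun i : ℕ =>
      (∫ r in (-((i : ℝ) * Δ))..(-(((i : ℝ) - 1) * Δ)), α r) ≤ -(ς * Δ) with hp
    set B := (Finset.Icc 1 n).filter p with hB
    set G := (Finset.Icc 1 n).filter (fun i => ¬ p i) with hG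
    have hcard : B.card + G.card = n := by
      rw [hB, hG, Finset.card_filter_add_card_filter_not, Nat.card_Icc]
      omega
    -- the total integral splits into the unit pieces
    have hadj := intervalIntegral.sum_integral_adjacent_intervals
      (a := fun k : ℕ => -((k : ℝ) * Δ)) (f := α) (μ := volume) (n := n)
      (fun k _ => hint _ _)
    have hIcc : ∑ i ∈ Finset.Icc 1 n,
        (∫ r in (-((i : ℝ) * Δ))..(-(((i : ℝ) - 1) * Δ)), α r)
        = ∫ r in (-((n : ℝ) * Δ))..(0 : ℝ), α r := by
      rw [← Finset.Ico_add_one_right_eq_Icc, Finset.sum_Ico_eq_sum_range]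
      simp only [Nat.add_sub_cancel]
      have : ∀ k ∈ Finset.range n,
          (∫ r in (-(((1 + k : ℕ) : ℝ) * Δ))..(-((((1 + k : ℕ) : ℝ) - 1) * Δ)), α r)
          = -(∫ r in (-((k : ℝ) * Δ))..(-(((k + 1 : ℕ) : ℝ) * Δ)), α r) := by
        intro k _
        rw [← intervalIntegral.integral_symm]
        push_cast
        ring_nf
      rw [Finset.sum_congr rfl this, Finset.sum_neg_distrib]
      rw [hadj, ← intervalIntegral.integral_symm]
      norm_num
    have hdec := hdecay n hn
    -- bound sums over B and G
    have hBsum : (B.card : ℝ) * (-(M * Δ)) ≤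
        ∑ i ∈ B, (∫ r in (-((i : ℝ) * Δ))..(-(((i : ℝ) - 1) * Δ)), α r) := by
      have := Finset.card_nsmul_le_sum B
        (fun i => ∫ r in (-((i : ℝ) * Δ))..(-(((i : ℝ) - 1) * Δ)), α r) (-(M * Δ))
        (fun i hi => hIlow i (Finset.mem_Icc.mp (Finset.mem_filter.mp hi).1).1)
      simpa [nsmul_eq_mul] using this
    have hGsum : (G.card : ℝ) * (-(ς * Δ)) ≤
        ∑ i ∈ G, (∫ r in (-((i : ℝ) * Δ))..(-(((i : ℝ) - 1) * Δ)), α r) := by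
      have := Finset.card_nsmul_le_sum G
        (fun i => ∫ r in (-((i : ℝ) * Δ))..(-(((i : ℝ) - 1) * Δ)), α r) (-(ς * Δ))
        (fun i hi => le_of_lt (lt_of_not_ge (Finset.mem_filter.mp hi).2))
      simpa [nsmul_eq_mul] using this
    have hsplit : ∑ i ∈ B, (∫ r in (-((i : ℝ) * Δ))..(-(((i : ℝ) - 1) * Δ)), α r)
        + ∑ i ∈ G, (∫ r in (-((i : ℝ) * Δ))..(-(((i : ℝ) - 1) * Δ)), α r)
        = ∑ i ∈ Finset.Icc 1 n,
            (∫ r in (-((i : ℝ) * Δ))..(-(((i : ℝ) - 1) * Δ)), α r) :=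
      Finset.sum_filter_add_sum_filter_not _ _ _
    have hmain : (B.card : ℝ) * (-(M * Δ)) + (G.card : ℝ) * (-(ς * Δ)) ≤ -(a * n * Δ) := by
      calc (B.card : ℝ) * (-(M * Δ)) + (G.card : ℝ) * (-(ς * Δ))
          ≤ _ + _ := add_le_add hBsum hGsum
        _ = ∑ i ∈ Finset.Icc 1 n,
            (∫ r in (-((i : ℝ) * Δ))..(-(((i : ℝ) - 1) * Δ)), α r) := hsplit
        _ = ∫ r in (-((n : ℝ) * Δ))..(0 : ℝ), α r := hIcc
        _ ≤ -(a * n * Δ) := hdec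
    have hGn : (G.card : ℝ) = (n : ℝ) - (B.card : ℝ) := by
      have : (B.card : ℝ) + (G.card : ℝ) = (n : ℝ) := by exact_mod_cast hcard
      linarith
    have hBn : (B.card : ℝ) ≤ (n : ℝ) := by
      have : B.card ≤ n := by omega
      exact_mod_cast this
    rw [div_le_div_iff₀ (by linarith) hn0']
    -- goal : a * n ≤ B.card * (2 * M)
    have h3 : a * (n : ℝ) * Δ ≤ (B.card : ℝ) * (M * Δ) + ((n : ℝ) - (B.card : ℝ)) * (ς * Δ) := by
      rw [hGn] at hmain; linarith
    have hb0 : (0 : ℝ) ≤ (B.card : ℝ) := Nat.cast_nonneg _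
    have h4a : (n : ℝ) - (B.card : ℝ) ≤ (n : ℝ) := by linarith
    have h4 : ((n : ℝ) - (B.card : ℝ)) * (ς * Δ) ≤ (n : ℝ) * (a / 2 * Δ) :=
      le_trans (mul_le_mul_of_nonneg_right h4a (by positivity))
        (mul_le_mul_of_nonneg_left (mul_le_mul_of_nonneg_right hςa hΔ.le) hn0'.le)
    have h6 : a / 2 * (n : ℝ) ≤ (B.card : ℝ) * M :=
      le_of_mul_le_mul_right (by nlinarith [h3, h4]) hΔ
    linarith
  refine ⟨key, ?_, ?_⟩
  · have hbdd : IsBoundedUnder (· ≤ ·) atTop (fun n : ℕ =>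
        ((((Finset.Icc 1 n).filter fun i : ℕ =>
            (∫ r in (-((i : ℝ) * Δ))..(-(((i : ℝ) - 1) * Δ)), α r) ≤
              -(ς * Δ)).card : ℝ) / (n : ℝ))) := by
      refine isBoundedUnder_of ⟨1, fun n => ?_⟩
      rcases Nat.eq_zero_or_pos n with h | h
      · subst h; simp
      · have hn0' : (0 : ℝ) < n := by exact_mod_cast h
        rw [div_le_one hn0']
        have : ((Finset.Icc 1 n).filter fun i : ℕ =>
            (∫ r in (-((i : ℝ) * Δ))..(-(((i : ℝ) - 1) * Δ)), α r) ≤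
              -(ς * Δ)).card ≤ n := by
          have := Finset.card_filter_le (Finset.Icc 1 n) (fun i : ℕ =>
            (∫ r in (-((i : ℝ) * Δ))..(-(((i : ℝ) - 1) * Δ)), α r) ≤ -(ς * Δ))
          simpa [Nat.card_Icc] using this
        exact_mod_cast this
    refine Filter.le_liminf_of_le hbdd.isCoboundedUnder_ge ?_
    refine eventually_atTop.mpr ⟨⌈T / Δ⌉₊, fun n hn => ?_⟩
    refine key n ?_
    have : T / Δ ≤ (n : ℝ) := le_trans (Nat.le_ceil _) (by exact_mod_cast hn)
    calc T = (T / Δ) * Δ := by field_simp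
      _ ≤ n * Δ := by nlinarith
  · have h1 : (0 : ℝ) < a / (2 * M) := by positivity
    have h2 := key
    refine lt_of_lt_of_le h1 ?_
    have hbdd : IsBoundedUnder (· ≤ ·) atTop (fun n : ℕ =>
        ((((Finset.Icc 1 n).filter fun i : ℕ =>
            (∫ r in (-((i : ℝ) * Δ))..(-(((i : ℝ) - 1) * Δ)), α r) ≤
              -(ς * Δ)).card : ℝ) / (n : ℝ))) := by
      refine isBoundedUnder_of ⟨1, fun n => ?_⟩
      rcases Nat.eq_zero_or_pos n with h | h
      · subst h; simp
      · have hn0' : (0 : ℝ) < n := by exact_mod_cast h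
        rw [div_le_one hn0']
        have : ((Finset.Icc 1 n).filter fun i : ℕ =>
            (∫ r in (-((i : ℝ) * Δ))..(-(((i : ℝ) - 1) * Δ)), α r) ≤
              -(ς * Δ)).card ≤ n := by
          have := Finset.card_filter_le (Finset.Icc 1 n) (fun i : ℕ =>
            (∫ r in (-((i : ℝ) * Δ))..(-(((i : ℝ) - 1) * Δ)), α r) ≤ -(ς * Δ))
          simpa [Nat.card_Icc] using this
        exact_mod_cast this
    refine Filter.le_liminf_of_le hbdd.isCoboundedUnder_ge ?_
    refine eventually_atTop.mpr ⟨⌈T / Δ⌉₊, fun n hn => ?_⟩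
    refine key n ?_
    have : T / Δ ≤ (n : ℝ) := le_trans (Nat.le_ceil _) (by exact_mod_cast hn)
    calc T = (T / Δ) * Δ := by field_simp
      _ ≤ n * Δ := by nlinarith
end

section
/- Let α : ℝ → ℝ be continuous and Λ : ℝ → [0,∞) be continuous, let c ≥ 0 be a constant, and suppose there is a nondecreasing function g : [0,∞) → [0,∞) with ∫_s^t (α_r⁺ + Λ_r) dr ≤ g(t−s) for all s ≤ t, where α_r⁺ = max{α_r, 0}. If limsup_{T→∞} (1/T) ∫_{−T}^0 α_r dr < 0, then for every t ∈ ℝ the integral m_t := ∫_{−∞}^t exp(2∫_u^t α_r dr) · (2Λ_u + c) du is finite. -/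
open MeasureTheory Filter

/-- under the averaged weak dissipativity condition, the quantity
`m_t = ∫_{-∞}^t exp(2∫_u^t α_r dr) (2Λ_u + c) du` is finite, i.e. the integrand is
integrable on `(-∞, t]`. -/
theorem statement19 (α Λ : ℝ → ℝ) (hα : Continuous α) (hΛ : Continuous Λ)
    (hΛ0 : ∀ t, 0 ≤ Λ t) (c : ℝ) (hc : 0 ≤ c)
    (g : ℝ → ℝ) (hg : MonotoneOn g (Set.Ici 0)) (hg0 : ∀ u, 0 ≤ u → 0 ≤ g u)
    (hint : ∀ s t : ℝ, s ≤ t → (∫ r in s..t, (max (α r) 0 + Λ r)) ≤ g (t - s))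
    (hlim : limsup (fun T : ℝ => (1 / T) * ∫ r in (-T)..(0 : ℝ), α r) atTop < 0) :
    ∀ t : ℝ, IntegrableOn
      (fun u => Real.exp (2 * ∫ r in u..t, α r) * (2 * Λ u + c)) (Set.Iic t) := by
  -- Extract a negative bound from the limsup condition
  obtain ⟨ε, hε, T₁, hT₁⟩ : ∃ ε > 0, ∃ T₁ : ℝ, ∀ T ≥ T₁,
      (1 / T) * ∫ r in (-T)..(0 : ℝ), α r ≤ -ε := by
    rw [limsup_eq] at hlim
    have hex : ∃ x ∈ {x : ℝ | ∀ᶠ T in atTop,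
        (1 / T) * ∫ r in (-T)..(0 : ℝ), α r ≤ x}, x < 0 := by
      by_contra hcon
      push_neg at hcon
      exact absurd hlim (not_lt.mpr (Real.sInf_nonneg hcon))
    obtain ⟨x, hx, hx0⟩ := hex
    rw [Set.mem_setOf_eq, eventually_atTop] at hx
    obtain ⟨T₁, hT₁⟩ := hx
    exact ⟨-x, by linarith, T₁, fun T hT => by simpa using hT₁ T hT⟩
  intro t
  set T₂ : ℝ := max T₁ 1 with hT₂def
  set a : ℝ := min t (-T₂) with hadef
  have ha_t : a ≤ t := min_le_left _ _
  have ha_T : a ≤ -T₂ := min_le_right _ _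
  have hαint : ∀ s u : ℝ, IntervalIntegrable α volume s u :=
    fun s u => hα.intervalIntegrable s u
  have hΛint : ∀ s u : ℝ, IntervalIntegrable Λ volume s u :=
    fun s u => hΛ.intervalIntegrable s u
  have hcomb : Continuous (fun r => max (α r) 0 + Λ r) :=
    (hα.max continuous_const).add hΛ
  -- decay of the averaged integral
  have hdecay : ∀ u : ℝ, u ≤ -T₂ → (∫ r in u..(0:ℝ), α r) ≤ ε * u := by
    intro u hu
    have hT2_1 : (1:ℝ) ≤ T₂ := le_max_right _ _
    have hupos : 0 < -u := by linarith
    have := hT₁ (-u) (by linarith [le_max_left T₁ (1:ℝ)])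
    rw [neg_neg] at this
    rw [one_div, mul_comm, ← div_eq_mul_inv] at this
    have h2 := (div_le_iff₀ hupos).mp this
    nlinarith [h2]
  set K : ℝ := ∫ r in (0:ℝ)..t, α r with hKdef
  -- Key pointwise exponent bound on each interval
  have key : ∀ n : ℕ, ∀ u ∈ Set.Ioc (a - (n+1:ℝ)) (a - n),
      (∫ r in u..t, α r) ≤ g 1 + ε * (a - n) + K := by
    intro n u hu
    obtain ⟨hu1, hu2⟩ := hu
    have hsplit : (∫ r in u..t, α r)
        = (∫ r in u..(a - n), α r) + (∫ r in (a - n)..(0:ℝ), α r) + K := by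
      rw [intervalIntegral.integral_add_adjacent_intervals (hαint _ _) (hαint _ _),
        intervalIntegral.integral_add_adjacent_intervals (hαint _ _) (hαint _ _)]
    have h1 : (∫ r in u..(a - n), α r) ≤ g 1 := by
      have hle : (∫ r in u..(a - n), α r) ≤ ∫ r in u..(a - n), (max (α r) 0 + Λ r) := by
        apply intervalIntegral.integral_mono_on hu2 (hαint _ _)
          (hcomb.intervalIntegrable _ _)
        intro x _
        have := hΛ0 x
        have := le_max_left (α x) 0
        linarith
      have h2 := hint u (a - n) hu2
      have h3 : g (a - n - u) ≤ g 1 := by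
        apply hg (by simp; linarith) (by norm_num) (by linarith)
      linarith
    have h2 : (∫ r in (a - n)..(0:ℝ), α r) ≤ ε * (a - n) := by
      apply hdecay
      have : (0:ℝ) ≤ n := Nat.cast_nonneg n
      linarith
    have h3 : ε * (a - n) ≤ ε * a - 0 := by nlinarith [Nat.cast_nonneg (α := ℝ) n]
    linarith
  -- The integrand
  set f : ℝ → ℝ := fun u => Real.exp (2 * ∫ r in u..t, α r) * (2 * Λ u + c) with hfdef
  have hfcont : Continuous f := by
    apply Continuous.mul _ (by continuity)
    apply Real.continuous_exp.comp
    apply continuous_const.mul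
    have : Continuous (fun u : ℝ => ∫ r in t..u, α r) :=
      intervalIntegral.continuous_primitive hαint t
    have heq : (fun u : ℝ => ∫ r in u..t, α r) = fun u => -(∫ r in t..u, α r) := by
      ext u; rw [intervalIntegral.integral_symm]
    rw [heq]
    exact this.neg
  have hfnn : ∀ u, 0 ≤ f u := by
    intro u
    apply mul_nonneg (Real.exp_pos _).le
    have := hΛ0 u; linarith
  -- Integrability on [a, t]
  have hIcc : IntegrableOn f (Set.Icc a t) := hfcont.integrableOn_Icc
  -- Integrability on (-∞, a]
  have hIic : IntegrableOn f (Set.Iic a) := by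
    constructor
    · exact hfcont.aestronglyMeasurable.restrict
    · rw [hasFiniteIntegral_iff_ofReal (Eventually.of_forall hfnn)]
      have hunion : Set.Iic a = ⋃ n : ℕ, Set.Ioc (a - (n+1:ℝ)) (a - n) := by
        ext x
        simp only [Set.mem_Iic, Set.mem_iUnion, Set.mem_Ioc]
        constructor
        · intro hx
          refine ⟨⌊a - x⌋₊, ?_, ?_⟩
          · have := Nat.lt_floor_add_one (a - x); linarith
          · have := Nat.floor_le (by linarith : (0:ℝ) ≤ a - x); linarith
        · rintro ⟨n, _, h2⟩
          have : (0:ℝ) ≤ n := Nat.cast_nonneg n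
          linarith
      rw [hunion, lintegral_iUnion (fun n => measurableSet_Ioc)]
      · -- bound the sum
        set D : ℝ := Real.exp (2 * (g 1 + ε * a + K)) * (2 * g 1 + c) with hDdef
        have hg1 : 0 ≤ g 1 := hg0 1 (by norm_num)
        have hD0 : 0 ≤ D := mul_nonneg (Real.exp_pos _).le (by linarith)
        have hcont2 : Continuous fun u => 2 * Λ u + c := (continuous_const.mul hΛ).add continuous_const
        have hΛg : ∀ n : ℕ, (∫ u in (a - (n+1:ℝ))..(a - n), (2 * Λ u + c)) ≤ 2 * g 1 + c := by
          intro n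
          have hle : a - (n+1:ℝ) ≤ a - n := by push_cast; linarith
          have h1 : (∫ u in (a - (n+1:ℝ))..(a - n), Λ u)
              ≤ ∫ u in (a - (n+1:ℝ))..(a - n), (max (α u) 0 + Λ u) := by
            apply intervalIntegral.integral_mono_on hle (hΛint _ _)
              (hcomb.intervalIntegrable _ _)
            intro x _
            have := le_max_right (α x) 0
            linarith
          have h2 := hint _ _ hle
          have h3 : a - (n:ℝ) - (a - (n+1:ℝ)) = 1 := by ring
          rw [h3] at h2
          rw [intervalIntegral.integral_add ((hΛint _ _).const_mul 2)
            intervalIntegrable_const, intervalIntegral.integral_const_mul,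
            intervalIntegral.integral_const, h3, one_smul]
          linarith
        have hbound : ∀ n : ℕ, (∫⁻ u in Set.Ioc (a - (n+1:ℝ)) (a - n), ENNReal.ofReal (f u))
            ≤ ENNReal.ofReal D * ENNReal.ofReal (Real.exp (-2 * ε)) ^ n := by
          intro n
          have hle : a - (n+1:ℝ) ≤ a - n := by push_cast; linarith
          have step1 : (∫⁻ u in Set.Ioc (a - (n+1:ℝ)) (a - n), ENNReal.ofReal (f u))
              ≤ ∫⁻ u in Set.Ioc (a - (n+1:ℝ)) (a - n),
                ENNReal.ofReal (Real.exp (2 * (g 1 + ε * (a - n) + K))) * ENNReal.ofReal (2 * Λ u + c) := by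
            apply setLIntegral_mono
            · exact (ENNReal.measurable_ofReal.comp hcont2.measurable).const_mul _
            · intro u hu
              rw [← ENNReal.ofReal_mul (Real.exp_pos _).le]
              apply ENNReal.ofReal_le_ofReal
              have hk := key n u hu
              have h2 : Real.exp (2 * ∫ r in u..t, α r)
                  ≤ Real.exp (2 * (g 1 + ε * (a - n) + K)) := by
                apply Real.exp_le_exp.mpr; linarith
              have h4 : 0 ≤ 2 * Λ u + c := by have := hΛ0 u; linarith
              exact mul_le_mul_of_nonneg_right h2 h4
          have step2 : (∫⁻ u in Set.Ioc (a - (n+1:ℝ)) (a - n),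
                ENNReal.ofReal (Real.exp (2 * (g 1 + ε * (a - n) + K))) * ENNReal.ofReal (2 * Λ u + c))
              = ENNReal.ofReal (Real.exp (2 * (g 1 + ε * (a - n) + K))) * ∫⁻ u in Set.Ioc (a - (n+1:ℝ)) (a - n),
                ENNReal.ofReal (2 * Λ u + c) :=
            lintegral_const_mul' _ _ ENNReal.ofReal_ne_top
          have step3 : (∫⁻ u in Set.Ioc (a - (n+1:ℝ)) (a - n), ENNReal.ofReal (2 * Λ u + c))
              = ENNReal.ofReal (∫ u in Set.Ioc (a - (n+1:ℝ)) (a - n), (2 * Λ u + c)) := by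
            rw [← ofReal_integral_eq_lintegral_ofReal hcont2.integrableOn_Ioc
              (Eventually.of_forall fun u => by have := hΛ0 u; dsimp; linarith)]
          have step4 : (∫ u in Set.Ioc (a - (n+1:ℝ)) (a - n), (2 * Λ u + c)) ≤ 2 * g 1 + c := by
            rw [← intervalIntegral.integral_of_le hle]
            exact hΛg n
          calc (∫⁻ u in Set.Ioc (a - (n+1:ℝ)) (a - n), ENNReal.ofReal (f u))
              ≤ ENNReal.ofReal (Real.exp (2 * (g 1 + ε * (a - n) + K))) * ∫⁻ u in Set.Ioc (a - (n+1:ℝ)) (a - n),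
                ENNReal.ofReal (2 * Λ u + c) := step1.trans (le_of_eq step2)
            _ ≤ ENNReal.ofReal (Real.exp (2 * (g 1 + ε * (a - n) + K))) * ENNReal.ofReal (2 * g 1 + c) := by
                rw [step3]
                exact mul_le_mul_right (ENNReal.ofReal_le_ofReal step4) _
            _ = ENNReal.ofReal D * ENNReal.ofReal (Real.exp (-2 * ε)) ^ n := by
                rw [← ENNReal.ofReal_pow (Real.exp_pos _).le,
                  ← ENNReal.ofReal_mul hD0, ← ENNReal.ofReal_mul (Real.exp_pos _).le]
                congr 1
                rw [← Real.exp_nat_mul, hDdef]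
                have hexp : (2:ℝ) * (g 1 + ε * (a - n) + K)
                    = 2 * (g 1 + ε * a + K) + (n:ℝ) * (-2 * ε) := by push_cast; ring
                rw [hexp, Real.exp_add]
                ring
        have hr : ENNReal.ofReal (Real.exp (-2 * ε)) < 1 := by
          rw [← ENNReal.ofReal_one]
          exact (ENNReal.ofReal_lt_ofReal_iff (by norm_num)).mpr
            (Real.exp_lt_one_iff.mpr (by linarith))
        calc (∑' n : ℕ, ∫⁻ u in Set.Ioc (a - (n+1:ℝ)) (a - n), ENNReal.ofReal (f u))
            ≤ ∑' n : ℕ, ENNReal.ofReal D * ENNReal.ofReal (Real.exp (-2 * ε)) ^ n :=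
              ENNReal.tsum_le_tsum hbound
          _ = ENNReal.ofReal D * ∑' n : ℕ, ENNReal.ofReal (Real.exp (-2 * ε)) ^ n :=
              ENNReal.tsum_mul_left
          _ < ⊤ := by
              apply ENNReal.mul_lt_top ENNReal.ofReal_lt_top
              rw [ENNReal.tsum_geometric]
              exact ENNReal.inv_lt_top.mpr (tsub_pos_of_lt hr)
      · intro i j hij
        simp only [Function.onFun]
        rw [Set.Ioc_disjoint_Ioc]
        rcases lt_or_gt_of_ne hij with h | h
        · have h1 : (i:ℝ) + 1 ≤ j := by exact_mod_cast h
          calc min (a - i) (a - j) ≤ a - j := min_le_right _ _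
            _ ≤ a - ((i:ℝ) + 1) := by linarith
            _ ≤ max (a - ((i:ℝ) + 1)) (a - ((j:ℝ) + 1)) := le_max_left _ _
        · have h1 : (j:ℝ) + 1 ≤ i := by exact_mod_cast h
          calc min (a - i) (a - j) ≤ a - i := min_le_left _ _
            _ ≤ a - ((j:ℝ) + 1) := by linarith
            _ ≤ max (a - ((i:ℝ) + 1)) (a - ((j:ℝ) + 1)) := le_max_right _ _
  have : Set.Iic t ⊆ Set.Iic a ∪ Set.Icc a t := by
    intro x hx
    simp only [Set.mem_Iic, Set.mem_union, Set.mem_Icc] at *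
    rcases le_or_gt x a with h | h
    · exact Or.inl h
    · exact Or.inr ⟨h.le, hx⟩
  exact (hIic.union hIcc).mono_set this
end
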